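/- arXiv:2401.09547 — 9 statements merged into one kernel-verified Lean document; each statement's English description precedes it below -/
import Mathlib

section
/- Let d be a positive natural number, β ≠ 0, and let ρ : ℝ × ℝ^d → ℝ with ρ(t,x) > 0 for all (t,x), such that x ↦ ρ(t,x) is twice differentiable for each t and t ↦ ρ(t,x) is differentiable for each x; let v : ℝ × ℝ^d → ℝ^d be differentiable in x. Suppose ρ satisfies the Fokker–Planck equation ∂_t ρ(t,x) + div_x(y ↦ ρ(t,y) • v(t,y))(x) = (1/β) Δ_x ρ(t,x) for all (t,x). Then ρ satisfies the continuity equation with the probability-flow velocity: ∂_t ρ(t,x) + div_x(y ↦ ρ(t,y) • (v(t,y) - (1/β) ∇_y log ρ(t,y)))(x) = 0 for all (t,x). -/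
open Real
open scoped RealInnerProductSpace

/-- Divergence of a vector field on `ℝ^d`: `div F x = ∑ i ∂F_i/∂x_i (x)`. -/
noncomputable def ediv {d : ℕ} (F : EuclideanSpace ℝ (Fin d) → EuclideanSpace ℝ (Fin d))
    (x : EuclideanSpace ℝ (Fin d)) : ℝ :=
  ∑ i, fderiv ℝ F x (EuclideanSpace.single i 1) i

/-- Laplacian of a scalar function on `ℝ^d`: `Δ g x = ∑ i ∂²g/∂x_i² (x)`. -/
noncomputable def elap {d : ℕ} (g : EuclideanSpace ℝ (Fin d) → ℝ)
    (x : EuclideanSpace ℝ (Fin d)) : ℝ :=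
  ∑ i, fderiv ℝ (fun y => fderiv ℝ g y (EuclideanSpace.single i 1)) x
    (EuclideanSpace.single i 1)

/-- if a positive density `ρ` solves the Fokker--Planck equation
`∂_t ρ + div_x(ρ v) = (1/β) Δ_x ρ`, then `ρ` solves the continuity equation with the
probability-flow velocity `v - (1/β) ∇_x log ρ`. -/
theorem fokker_planck_probability_flow
    (d : ℕ) (hd : 0 < d) (β : ℝ) (hβ : β ≠ 0)
    (ρ : ℝ → EuclideanSpace ℝ (Fin d) → ℝ)
    (hpos : ∀ t x, 0 < ρ t x)
    (hρx : ∀ t, Differentiable ℝ (ρ t))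
    (hρxx : ∀ t, Differentiable ℝ (fderiv ℝ (ρ t)))
    (hρt : ∀ x, Differentiable ℝ (fun t => ρ t x))
    (v : ℝ → EuclideanSpace ℝ (Fin d) → EuclideanSpace ℝ (Fin d))
    (hv : ∀ t, Differentiable ℝ (v t))
    (hFP : ∀ t x, deriv (fun τ => ρ τ x) t + ediv (fun y => ρ t y • v t y) x
      = (1 / β) * elap (ρ t) x) :
    ∀ t x, deriv (fun τ => ρ τ x) t
      + ediv (fun y => ρ t y •
          (v t y - (1 / β) • gradient (fun z => Real.log (ρ t z)) y)) x = 0 := by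
  intro t x
  set G : EuclideanSpace ℝ (Fin d) → EuclideanSpace ℝ (Fin d) := gradient (ρ t) with hGdef
  -- gradient of log ρ
  have hlogGrad : ∀ y, gradient (fun z => Real.log (ρ t z)) y = (ρ t y)⁻¹ • G y := by
    intro y
    have hne : ρ t y ≠ 0 := (hpos t y).ne'
    have h1 : HasFDerivAt (fun z => Real.log (ρ t z)) ((ρ t y)⁻¹ • fderiv ℝ (ρ t) y) y :=
      (Real.hasDerivAt_log hne).comp_hasFDerivAt y ((hρx t y).hasFDerivAt)
    simp only [hGdef, gradient, h1.fderiv, map_smul]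
  -- the vector field simplification
  have hfield : (fun y => ρ t y •
      (v t y - (1 / β) • gradient (fun z => Real.log (ρ t z)) y))
      = fun y => ρ t y • v t y - (1 / β) • G y := by
    funext y
    have hne : ρ t y ≠ 0 := (hpos t y).ne'
    rw [hlogGrad y, smul_sub, smul_smul, smul_smul,
      show (ρ t y * (1 / β) * (ρ t y)⁻¹) = 1 / β by field_simp]
  -- G is differentiable
  have hG : Differentiable ℝ G := by
    have : G = fun y => (InnerProductSpace.toDual ℝ (EuclideanSpace ℝ (Fin d))).symm
        (fderiv ℝ (ρ t) y) := rfl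
    rw [this]
    exact (InnerProductSpace.toDual ℝ _).symm.toContinuousLinearEquiv.differentiable.comp (hρxx t)
  -- component identity: G y i = fderiv ρ y e_i
  have hcomp : ∀ y (i : Fin d), G y i = fderiv ℝ (ρ t) y (EuclideanSpace.single i 1) := by
    intro y i
    have : ⟪G y, EuclideanSpace.single i 1⟫ = fderiv ℝ (ρ t) y (EuclideanSpace.single i 1) := by
      simp [hGdef, gradient, InnerProductSpace.toDual_symm_apply]
    rw [← this, EuclideanSpace.inner_single_right]
    simp [mul_comm]
  -- div G = elap ρ
  have hdivG : ∑ i, fderiv ℝ G x (EuclideanSpace.single i 1) i = elap (ρ t) x := by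
    unfold elap
    refine Finset.sum_congr rfl fun i _ => ?_
    have heq : (fun y => fderiv ℝ (ρ t) y (EuclideanSpace.single i 1))
        = ⇑(EuclideanSpace.proj i : EuclideanSpace ℝ (Fin d) →L[ℝ] ℝ) ∘ G := by
      funext y; simp [Function.comp, ← hcomp y i]
    have h2 : fderiv ℝ (⇑(EuclideanSpace.proj i :
          EuclideanSpace ℝ (Fin d) →L[ℝ] ℝ) ∘ G) x
        = (EuclideanSpace.proj i).comp (fderiv ℝ G x) :=
      ((EuclideanSpace.proj i).hasFDerivAt.comp x (hG x).hasFDerivAt).fderiv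
    rw [heq, h2]
    simp
  -- compute ediv of the field
  have hprod : Differentiable ℝ (fun y => ρ t y • v t y) := (hρx t).smul (hv t)
  have hediv : ediv (fun y => ρ t y •
      (v t y - (1 / β) • gradient (fun z => Real.log (ρ t z)) y)) x
      = ediv (fun y => ρ t y • v t y) x - (1 / β) * elap (ρ t) x := by
    rw [hfield]
    unfold ediv
    rw [← hdivG, Finset.mul_sum, ← Finset.sum_sub_distrib]
    refine Finset.sum_congr rfl fun i _ => ?_
    rw [fderiv_fun_sub (hprod x) (by exact (hG x).const_smul ((1:ℝ)/β) : DifferentiableAt ℝ (fun y => ((1:ℝ)/β) • G y) x),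
      fderiv_fun_const_smul (hG x) ((1:ℝ)/β)]
    simp
  rw [hediv]
  have := hFP t x
  linarith
end

section
/- Let d be a positive natural number and β ≠ 0. Let φ : ℝ × ℝ^d → ℝ be differentiable (jointly in (t,x)) with x ↦ φ(t,x) twice differentiable; let H : ℝ × ℝ^d × ℝ^d → ℝ be such that p ↦ H(t,x,p) is differentiable with gradient D_p H(t,x,p); let f : ℝ × ℝ^d → ℝ; let ρ : ℝ × ℝ^d → ℝ be positive with x ↦ log ρ(t,x) differentiable, with score s(t,x) = ∇_x log ρ(t,x). Assume the Hamilton–Jacobi–Bellman equation holds: ∂_t φ(t,x) + H(t,x, ∇_x φ(t,x)) + (1/β) Δ_x φ(t,x) = f(t,x) for all (t,x). Let x : ℝ → ℝ^d be differentiable with x'(t) = D_p H(t, x(t), z(t)) - (1/β) s(t, x(t)), where z(t) = ∇_x φ(t, x(t)). Then y(t) := φ(t, x(t)) is differentiable with y'(t) = f(t,x(t)) - (1/β) Δ_x φ(t,x(t)) - H(t, x(t), z(t)) + ⟨z(t), D_p H(t, x(t), z(t))⟩ - (1/β) ⟨z(t), s(t,x(t))⟩ for every t. -/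
open Real
open scoped RealInnerProductSpace

/-- along the probability flow `x'(t) = D_p H(t,x(t),z(t)) - (1/β) s(t,x(t))`
with `z(t) = ∇_x φ(t,x(t))` and score `s = ∇_x log ρ`, if `φ` solves the HJB equation
`∂_t φ + H(t,x,∇_x φ) + (1/β) Δ_x φ = f`, then `y(t) = φ(t,x(t))` is differentiable with
`y'(t) = f - (1/β) Δ_x φ - H + ⟨z, D_p H⟩ - (1/β) ⟨z, s⟩` evaluated along the flow. -/
theorem adjoint_dynamics_along_probability_flow
    (d : ℕ) (hd : 0 < d) (β : ℝ) (hβ : β ≠ 0)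
    (φ : ℝ × EuclideanSpace ℝ (Fin d) → ℝ)
    (hφ : Differentiable ℝ φ)
    (hφxx : ∀ t, Differentiable ℝ (fderiv ℝ (fun y => φ (t, y))))
    (H : ℝ → EuclideanSpace ℝ (Fin d) → EuclideanSpace ℝ (Fin d) → ℝ)
    (DpH : ℝ → EuclideanSpace ℝ (Fin d) → EuclideanSpace ℝ (Fin d) →
      EuclideanSpace ℝ (Fin d))
    (hH : ∀ t x p, HasGradientAt (H t x) (DpH t x p) p)
    (f : ℝ → EuclideanSpace ℝ (Fin d) → ℝ)
    (ρ : ℝ → EuclideanSpace ℝ (Fin d) → ℝ)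
    (hpos : ∀ t x, 0 < ρ t x)
    (hlog : ∀ t, Differentiable ℝ (fun y => Real.log (ρ t y)))
    (s : ℝ → EuclideanSpace ℝ (Fin d) → EuclideanSpace ℝ (Fin d))
    (hs : ∀ t x, s t x = gradient (fun y => Real.log (ρ t y)) x)
    (hHJB : ∀ t x, deriv (fun τ => φ (τ, x)) t
      + H t x (gradient (fun y => φ (t, y)) x)
      + (1 / β) * elap (fun y => φ (t, y)) x = f t x)
    (x : ℝ → EuclideanSpace ℝ (Fin d))
    (hx : ∀ t, HasDerivAt x
      (DpH t (x t) (gradient (fun y => φ (t, y)) (x t))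
        - (1 / β) • s t (x t)) t) :
    ∀ t, HasDerivAt (fun τ => φ (τ, x τ))
      (f t (x t) - (1 / β) * elap (fun y => φ (t, y)) (x t)
        - H t (x t) (gradient (fun y => φ (t, y)) (x t))
        + ⟪gradient (fun y => φ (t, y)) (x t),
            DpH t (x t) (gradient (fun y => φ (t, y)) (x t))⟫
        - (1 / β) * ⟪gradient (fun y => φ (t, y)) (x t), s t (x t)⟫) t := by
  intro t
  set z := gradient (fun y => φ (t, y)) (x t) with hz
  set v := DpH t (x t) z - (1 / β) • s t (x t) with hv
  have hφd : DifferentiableAt ℝ φ (t, x t) := hφ (t, x t)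
  have hF := hφd.hasFDerivAt
  set F := fderiv ℝ φ (t, x t) with hFdef
  -- the curve τ ↦ (τ, x τ)
  have hc : HasDerivAt (fun τ => (τ, x τ)) ((1 : ℝ), v) t :=
    (hasDerivAt_id t).prodMk (hx t)
  have hcomp : HasDerivAt (fun τ => φ (τ, x τ)) (F ((1 : ℝ), v)) t :=
    hF.comp_hasDerivAt t hc
  -- partial derivative in t
  have hct : HasDerivAt (fun τ => (τ, x t)) ((1 : ℝ), (0 : EuclideanSpace ℝ (Fin d))) t :=
    (hasDerivAt_id t).prodMk (hasDerivAt_const t (x t))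
  have hpt : HasDerivAt (fun τ => φ (τ, x t)) (F ((1 : ℝ), 0)) t :=
    hF.comp_hasDerivAt t hct
  have hderiv_t : deriv (fun τ => φ (τ, x t)) t = F ((1 : ℝ), 0) := hpt.deriv
  -- partial derivative in x
  have hdx : DifferentiableAt ℝ (fun y => φ (t, y)) (x t) :=
    hφd.comp (x t) ((differentiableAt_const t).prodMk differentiableAt_id)
  have hgrad : HasGradientAt (fun y => φ (t, y)) z (x t) := hdx.hasGradientAt
  have hfd1 : HasFDerivAt (fun y => φ (t, y))
      ((InnerProductSpace.toDual ℝ (EuclideanSpace ℝ (Fin d))) z) (x t) :=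
    hgrad.hasFDerivAt
  have hfd2 : HasFDerivAt (fun y => φ (t, y))
      (F.comp ((ContinuousLinearMap.inr ℝ ℝ (EuclideanSpace ℝ (Fin d))))) (x t) := by
    exact hF.comp (x t) ((hasFDerivAt_const t (x t)).prodMk (hasFDerivAt_id (x t)))
  have hEq := hfd1.unique hfd2
  have hinner : ∀ w : EuclideanSpace ℝ (Fin d), ⟪z, w⟫ = F (0, w) := by
    intro w
    have := congrArg (fun (L : EuclideanSpace ℝ (Fin d) →L[ℝ] ℝ) => L w) hEq
    simpa [InnerProductSpace.toDual_apply_apply] using this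
  -- combine
  have hFsplit : F ((1 : ℝ), v) = F ((1 : ℝ), 0) + F (0, v) := by
    rw [← map_add]
    norm_num
  have hHJBt := hHJB t (x t)
  have hvinner : ⟪z, v⟫ = ⟪z, DpH t (x t) z⟫ - (1 / β) * ⟪z, s t (x t)⟫ := by
    rw [hv, inner_sub_right, real_inner_smul_right]
  have : F ((1 : ℝ), v) = f t (x t) - (1 / β) * elap (fun y => φ (t, y)) (x t)
      - H t (x t) z + ⟪z, DpH t (x t) z⟫ - (1 / β) * ⟪z, s t (x t)⟫ := by
    rw [hFsplit, ← hderiv_t, ← hinner, hvinner]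
    rw [← hz] at hHJBt
    linarith
  rw [this] at hcomp
  exact hcomp
end

section
/- Let d be a positive natural number and β ≠ 0. Let φ : ℝ × ℝ^d → ℝ be differentiable (jointly in (t,x)) with x ↦ φ(t,x) twice differentiable; let H : ℝ × ℝ^d × ℝ^d → ℝ be such that p ↦ H(t,x,p) is differentiable with gradient D_p H(t,x,p); let L : ℝ × ℝ^d × ℝ^d → ℝ satisfy the Legendre (Fenchel–Young) identity L(t,x, D_p H(t,x,p)) = ⟨p, D_p H(t,x,p)⟩ - H(t,x,p) for all (t,x,p); let f : ℝ × ℝ^d → ℝ; let ρ : ℝ × ℝ^d → ℝ be positive with x ↦ log ρ(t,x) differentiable, with score s(t,x) = ∇_x log ρ(t,x). Assume the Hamilton–Jacobi–Bellman equation ∂_t φ(t,x) + H(t,x, ∇_x φ(t,x)) + (1/β) Δ_x φ(t,x) = f(t,x) holds for all (t,x). Let x : ℝ → ℝ^d be differentiable with x'(t) = D_p H(t, x(t), z(t)) - (1/β) s(t, x(t)), where z(t) = ∇_x φ(t, x(t)). Then y(t) := φ(t, x(t)) is differentiable with y'(t) = L(t, x(t), D_p H(t, x(t), z(t))) + f(t,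 x(t)) - (1/β) Δ_x φ(t, x(t)) - (1/β) ⟨z(t), s(t, x(t))⟩ for every t. -/
open Real
open scoped RealInnerProductSpace

/-- forward-backward score dynamics with the Lagrangian. Along the
probability flow `x'(t) = D_p H(t,x(t),z(t)) - (1/β) s(t,x(t))`, `z(t) = ∇_x φ(t,x(t))`,
with `L` satisfying the Fenchel–Young identity
`L(t,x,D_p H(t,x,p)) = ⟨p, D_p H(t,x,p)⟩ - H(t,x,p)`, if `φ` solves the HJB equation then
`y(t) = φ(t,x(t))` satisfies
`y'(t) = L(t,x(t),D_p H) + f - (1/β) Δ_x φ - (1/β)⟨z, s⟩` along the flow. -/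
theorem forward_backward_score_dynamics
    (d : ℕ) (hd : 0 < d) (β : ℝ) (hβ : β ≠ 0)
    (φ : ℝ × EuclideanSpace ℝ (Fin d) → ℝ)
    (hφ : Differentiable ℝ φ)
    (hφxx : ∀ t, Differentiable ℝ (fderiv ℝ (fun y => φ (t, y))))
    (H : ℝ → EuclideanSpace ℝ (Fin d) → EuclideanSpace ℝ (Fin d) → ℝ)
    (DpH : ℝ → EuclideanSpace ℝ (Fin d) → EuclideanSpace ℝ (Fin d) →
      EuclideanSpace ℝ (Fin d))
    (hH : ∀ t x p, HasGradientAt (H t x) (DpH t x p) p)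
    (L : ℝ → EuclideanSpace ℝ (Fin d) → EuclideanSpace ℝ (Fin d) → ℝ)
    (hLegendre : ∀ t x p, L t x (DpH t x p) = ⟪p, DpH t x p⟫ - H t x p)
    (f : ℝ → EuclideanSpace ℝ (Fin d) → ℝ)
    (ρ : ℝ → EuclideanSpace ℝ (Fin d) → ℝ)
    (hpos : ∀ t x, 0 < ρ t x)
    (hlog : ∀ t, Differentiable ℝ (fun y => Real.log (ρ t y)))
    (s : ℝ → EuclideanSpace ℝ (Fin d) → EuclideanSpace ℝ (Fin d))
    (hs : ∀ t x, s t x = gradient (fun y => Real.log (ρ t y)) x)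
    (hHJB : ∀ t x, deriv (fun τ => φ (τ, x)) t
      + H t x (gradient (fun y => φ (t, y)) x)
      + (1 / β) * elap (fun y => φ (t, y)) x = f t x)
    (x : ℝ → EuclideanSpace ℝ (Fin d))
    (hx : ∀ t, HasDerivAt x
      (DpH t (x t) (gradient (fun y => φ (t, y)) (x t))
        - (1 / β) • s t (x t)) t) :
    ∀ t, HasDerivAt (fun τ => φ (τ, x τ))
      (L t (x t) (DpH t (x t) (gradient (fun y => φ (t, y)) (x t)))
        + f t (x t)
        - (1 / β) * elap (fun y => φ (t, y)) (x t)
        - (1 / β) * ⟪gradient (fun y => φ (t, y)) (x t), s t (x t)⟫) t := by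

  intro t
  set X := x t with hX
  set z := gradient (fun y => φ (t, y)) X with hz
  have hF := (hφ (t, X)).hasFDerivAt
  set F := fderiv ℝ φ (t, X) with hFdef
  set v : EuclideanSpace ℝ (Fin d) := DpH t X z - (1 / β) • s t X with hv
  -- derivative of the composition
  have hcomp : HasDerivAt (fun τ => φ (τ, x τ)) (F (1, v)) t :=
    hF.comp_hasDerivAt t ((hasDerivAt_id t).prodMk (hx t))
  -- time partial
  have ht : HasDerivAt (fun τ => φ (τ, X)) (F (1, 0)) t := by
    have := hF.comp_hasDerivAt t ((hasDerivAt_id t).prodMk (hasDerivAt_const t X))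
    simpa [Function.comp_def] using this
  -- space partial
  have hxF : HasFDerivAt (fun y => φ (t, y))
      (F.comp (ContinuousLinearMap.inr ℝ ℝ (EuclideanSpace ℝ (Fin d)))) X := by
    have := hF.comp X ((hasFDerivAt_const t X).prodMk (hasFDerivAt_id X))
    exact this
  have hdiffx : DifferentiableAt ℝ (fun y => φ (t, y)) X := hxF.differentiableAt
  have hg : HasGradientAt (fun y => φ (t, y)) z X := hdiffx.hasGradientAt
  have hEq : (InnerProductSpace.toDual ℝ (EuclideanSpace ℝ (Fin d))) z
      = F.comp (ContinuousLinearMap.inr ℝ ℝ (EuclideanSpace ℝ (Fin d))) :=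
    hg.hasFDerivAt.unique hxF
  have hinner : ∀ w : EuclideanSpace ℝ (Fin d), F (0, w) = ⟪z, w⟫ := by
    intro w
    have := congrArg (fun (T : EuclideanSpace ℝ (Fin d) →L[ℝ] ℝ) => T w) hEq
    simpa [InnerProductSpace.toDual_apply_apply] using this.symm
  have hsplit : F (1, v) = F (1, 0) + F (0, v) := by
    rw [← map_add]
    norm_num
  have hHJB' := hHJB t X
  have htderiv : deriv (fun τ => φ (τ, X)) t = F (1, 0) := ht.deriv
  rw [htderiv] at hHJB'
  have hval : F (1, v) =
      L t X (DpH t X z) + f t X - (1 / β) * elap (fun y => φ (t, y)) X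
        - (1 / β) * ⟪z, s t X⟫ := by
    rw [hsplit, hinner v, hv, inner_sub_right, real_inner_smul_right,
      hLegendre t X z]
    have hF10 : F (1, 0) = f t X - H t X z - (1 / β) * elap (fun y => φ (t, y)) X := by
      rw [← hz] at hHJB'
      linarith
    rw [hF10]
    ring
  rw [hval] at hcomp
  exact hcomp
end

section
/- Let d be a positive natural number and β ≠ 0. Let φ : ℝ × ℝ^d → ℝ be differentiable (jointly in (t,x)) with x ↦ φ(t,x) twice differentiable; let H : ℝ × ℝ^d × ℝ^d → ℝ be such that p ↦ H(t,x,p) is differentiable with gradient D_p H(t,x,p); let f : ℝ × ℝ^d → ℝ; let s : ℝ × ℝ^d → ℝ^d. Let x : ℝ → ℝ^d be differentiable with x'(t) = D_p H(t, x(t), z(t)) - (1/β) s(t, x(t)), where z(t) = ∇_x φ(t, x(t)), and let y : ℝ → ℝ be differentiable with y'(t) = f(t, x(t)) - (1/β) Δ_x φ(t, x(t)) - H(t, x(t), z(t)) + ⟨z(t), D_p H(t, x(t), z(t)) - (1/β) s(t, x(t))⟩. Then the function t ↦ φ(t, x(t)) - y(t) is differentiable with derivative equal to the HJB residual along the trajectory: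 d/dt [φ(t, x(t)) - y(t)] = ∂_t φ(t, x(t)) + (1/β) Δ_x φ(t, x(t)) + H(t, x(t), ∇_x φ(t, x(t))) - f(t, x(t)) for every t. -/
open Real
open scoped RealInnerProductSpace

/-- for the simulated forward-backward score dynamics `(x(t), y(t))`
associated with a candidate `φ`, the mismatch `t ↦ φ(t,x(t)) - y(t)` is differentiable
with derivative equal to the HJB residual
`∂_t φ + (1/β) Δ_x φ + H(t,x,∇_x φ) - f` along the trajectory. -/
theorem mismatch_derivative_is_hjb_residual
    (d : ℕ) (hd : 0 < d) (β : ℝ) (hβ : β ≠ 0)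
    (φ : ℝ × EuclideanSpace ℝ (Fin d) → ℝ)
    (hφ : Differentiable ℝ φ)
    (hφxx : ∀ t, Differentiable ℝ (fderiv ℝ (fun y => φ (t, y))))
    (H : ℝ → EuclideanSpace ℝ (Fin d) → EuclideanSpace ℝ (Fin d) → ℝ)
    (DpH : ℝ → EuclideanSpace ℝ (Fin d) → EuclideanSpace ℝ (Fin d) →
      EuclideanSpace ℝ (Fin d))
    (hH : ∀ t x p, HasGradientAt (H t x) (DpH t x p) p)
    (f : ℝ → EuclideanSpace ℝ (Fin d) → ℝ)
    (s : ℝ → EuclideanSpace ℝ (Fin d) → EuclideanSpace ℝ (Fin d))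
    (x : ℝ → EuclideanSpace ℝ (Fin d))
    (hx : ∀ t, HasDerivAt x
      (DpH t (x t) (gradient (fun y => φ (t, y)) (x t))
        - (1 / β) • s t (x t)) t)
    (y : ℝ → ℝ)
    (hy : ∀ t, HasDerivAt y
      (f t (x t) - (1 / β) * elap (fun y' => φ (t, y')) (x t)
        - H t (x t) (gradient (fun y' => φ (t, y')) (x t))
        + ⟪gradient (fun y' => φ (t, y')) (x t),
            DpH t (x t) (gradient (fun y' => φ (t, y')) (x t))
              - (1 / β) • s t (x t)⟫) t) :
    ∀ t, HasDerivAt (fun τ => φ (τ, x τ) - y τ)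
      (deriv (fun τ => φ (τ, x t)) t
        + (1 / β) * elap (fun y' => φ (t, y')) (x t)
        + H t (x t) (gradient (fun y' => φ (t, y')) (x t))
        - f t (x t)) t := by
  intro t
  set g := gradient (fun y' => φ (t, y')) (x t) with hg
  set v := DpH t (x t) g - (1 / β) • s t (x t) with hv
  have hxv := hx t
  have hyv := hy t
  have hφd : HasFDerivAt φ (fderiv ℝ φ (t, x t)) (t, x t) := (hφ _).hasFDerivAt
  have hcurve : HasDerivAt (fun τ => ((τ, x τ) : ℝ × EuclideanSpace ℝ (Fin d))) (1, v) t :=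
    (hasDerivAt_id t).prodMk hxv
  have hcomp : HasDerivAt (fun τ => φ (τ, x τ)) (fderiv ℝ φ (t, x t) (1, v)) t :=
    hφd.comp_hasDerivAt t hcurve
  have hpart : HasDerivAt (fun τ => φ (τ, x t)) (fderiv ℝ φ (t, x t) (1, 0)) t :=
    hφd.comp_hasDerivAt t ((hasDerivAt_id t).prodMk (hasDerivAt_const t (x t)))
  have hpt : deriv (fun τ => φ (τ, x t)) t = fderiv ℝ φ (t, x t) (1, 0) := hpart.deriv
  -- the x-partial derivative
  have hxpartial : HasFDerivAt (fun y' => φ (t, y'))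
      ((fderiv ℝ φ (t, x t)).comp (ContinuousLinearMap.inr ℝ ℝ (EuclideanSpace ℝ (Fin d))))
      (x t) :=
    hφd.comp (x t) (hasFDerivAt_prodMk_right t (x t))
  have hgrad : HasGradientAt (fun y' => φ (t, y')) g (x t) :=
    (hxpartial.differentiableAt).hasGradientAt
  have hinner : fderiv ℝ φ (t, x t) (0, v) = ⟪g, v⟫ := by
    have := hgrad.hasFDerivAt.unique hxpartial
    have h2 : ((InnerProductSpace.toDual ℝ (EuclideanSpace ℝ (Fin d))) g) v
        = fderiv ℝ φ (t, x t) (0, v) := by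
      rw [this]; rfl
    rw [← h2]; simp [InnerProductSpace.toDual_apply_apply]
  have hsplit : fderiv ℝ φ (t, x t) (1, v)
      = fderiv ℝ φ (t, x t) (1, 0) + fderiv ℝ φ (t, x t) (0, v) := by
    rw [← ContinuousLinearMap.map_add]
    norm_num
  have := hcomp.fun_sub hyv
  refine this.congr_deriv ?_
  rw [hpt, hsplit, hinner]
  ring
end

section
/- Let d be a positive natural number, β ≠ 0, and T > 0. Let φ : ℝ × ℝ^d → ℝ be differentiable (jointly in (t,x)) with x ↦ φ(t,x) twice differentiable; let H : ℝ × ℝ^d × ℝ^d → ℝ be such that p ↦ H(t,x,p) is differentiable with gradient D_p H(t,x,p); let f : ℝ × ℝ^d → ℝ; let s : ℝ × ℝ^d → ℝ^d. Let x : ℝ → ℝ^d be differentiable with x'(t) = D_p H(t, x(t), z(t)) - (1/β) s(t, x(t)) where z(t) = ∇_x φ(t, x(t)); let y : ℝ → ℝ be differentiable with y(0) = φ(0, x(0)) and y'(t) = f(t, x(t)) - (1/β) Δ_x φ(t, x(t)) - H(t, x(t), z(t)) + ⟨z(t), D_p H(t, x(t), z(t)) - (1/β) s(t, x(t))⟩.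 Define the residual R(t) = ∂_t φ(t, x(t)) + (1/β) Δ_x φ(t, x(t)) + H(t, x(t), ∇_x φ(t, x(t))) - f(t, x(t)) and assume R is continuous on [0, T]. Then for every t ∈ [0, T], φ(t, x(t)) - y(t) = ∫₀ᵗ R(s) ds. -/
open Real MeasureTheory
open scoped RealInnerProductSpace

/-- for the forward-backward score dynamics `(x(t), y(t))` with
`y(0) = φ(0,x(0))`, the mismatch satisfies `φ(t,x(t)) - y(t) = ∫₀ᵗ R(s) ds` on `[0,T]`,
where `R` is the HJB residual along the trajectory. -/
theorem mismatch_eq_integral_of_residual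
    (d : ℕ) (hd : 0 < d) (β T : ℝ) (hβ : β ≠ 0) (hT : 0 < T)
    (φ : ℝ × EuclideanSpace ℝ (Fin d) → ℝ)
    (hφ : Differentiable ℝ φ)
    (hφxx : ∀ t, Differentiable ℝ (fderiv ℝ (fun y => φ (t, y))))
    (H : ℝ → EuclideanSpace ℝ (Fin d) → EuclideanSpace ℝ (Fin d) → ℝ)
    (DpH : ℝ → EuclideanSpace ℝ (Fin d) → EuclideanSpace ℝ (Fin d) →
      EuclideanSpace ℝ (Fin d))
    (hH : ∀ t x p, HasGradientAt (H t x) (DpH t x p) p)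
    (f : ℝ → EuclideanSpace ℝ (Fin d) → ℝ)
    (s : ℝ → EuclideanSpace ℝ (Fin d) → EuclideanSpace ℝ (Fin d))
    (x : ℝ → EuclideanSpace ℝ (Fin d))
    (hx : ∀ t, HasDerivAt x
      (DpH t (x t) (gradient (fun y => φ (t, y)) (x t))
        - (1 / β) • s t (x t)) t)
    (y : ℝ → ℝ)
    (hy0 : y 0 = φ (0, x 0))
    (hy : ∀ t, HasDerivAt y
      (f t (x t) - (1 / β) * elap (fun y' => φ (t, y')) (x t)
        - H t (x t) (gradient (fun y' => φ (t, y')) (x t))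
        + ⟪gradient (fun y' => φ (t, y')) (x t),
            DpH t (x t) (gradient (fun y' => φ (t, y')) (x t))
              - (1 / β) • s t (x t)⟫) t)
    (R : ℝ → ℝ)
    (hR : ∀ t, R t = deriv (fun τ => φ (τ, x t)) t
      + (1 / β) * elap (fun y' => φ (t, y')) (x t)
      + H t (x t) (gradient (fun y' => φ (t, y')) (x t))
      - f t (x t))
    (hRcont : ContinuousOn R (Set.Icc 0 T)) :
    ∀ t ∈ Set.Icc (0:ℝ) T, φ (t, x t) - y t = ∫ τ in (0:ℝ)..t, R τ := by

  intro t ht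
  -- derivative of the mismatch g(τ) = φ(τ, x τ) - y τ is R τ
  have key : ∀ τ : ℝ, HasDerivAt (fun u => φ (u, x u) - y u) (R τ) τ := by
    intro τ
    set p : ℝ × EuclideanSpace ℝ (Fin d) := (τ, x τ) with hp
    set z : EuclideanSpace ℝ (Fin d) := gradient (fun y' => φ (τ, y')) (x τ) with hz
    set v : EuclideanSpace ℝ (Fin d) := DpH τ (x τ) z - (1 / β) • s τ (x τ) with hv
    have hφf : HasFDerivAt φ (fderiv ℝ φ p) p := (hφ p).hasFDerivAt
    -- full derivative along the curve
    have hc : HasDerivAt (fun u => (u, x u)) ((1:ℝ), v) τ :=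
      HasDerivAt.prodMk (hasDerivAt_id τ) (hx τ)
    have h1 : HasDerivAt (fun u => φ (u, x u)) (fderiv ℝ φ p ((1:ℝ), v)) τ :=
      hφf.comp_hasDerivAt τ hc
    -- time partial derivative
    have hct : HasDerivAt (fun u => ((u : ℝ), x τ)) ((1:ℝ), (0 : EuclideanSpace ℝ (Fin d))) τ :=
      HasDerivAt.prodMk (hasDerivAt_id τ) (hasDerivAt_const τ (x τ))
    have hpt : HasDerivAt (fun u => φ (u, x τ)) (fderiv ℝ φ p ((1:ℝ), (0 : EuclideanSpace ℝ (Fin d)))) τ :=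
      hφf.comp_hasDerivAt τ hct
    have hderiv_t : deriv (fun u => φ (u, x τ)) τ = fderiv ℝ φ p ((1:ℝ), (0 : EuclideanSpace ℝ (Fin d))) :=
      hpt.deriv
    -- space partial derivative
    have hcs : HasFDerivAt (fun yv : EuclideanSpace ℝ (Fin d) => φ (τ, yv))
        ((fderiv ℝ φ p).comp (ContinuousLinearMap.inr ℝ ℝ (EuclideanSpace ℝ (Fin d)))) (x τ) :=
      hφf.comp (x τ) (hasFDerivAt_prodMk_right τ (x τ))
    have hgrad : HasGradientAt (fun yv : EuclideanSpace ℝ (Fin d) => φ (τ, yv)) z (x τ) :=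
      hcs.differentiableAt.hasGradientAt
    have hinner : ∀ w : EuclideanSpace ℝ (Fin d), fderiv ℝ φ p ((0:ℝ), w) = ⟪z, w⟫ := by
      intro w
      have := hgrad.hasFDerivAt.unique hcs
      have h2 : (InnerProductSpace.toDual ℝ (EuclideanSpace ℝ (Fin d)) z) w
          = ((fderiv ℝ φ p).comp (ContinuousLinearMap.inr ℝ ℝ (EuclideanSpace ℝ (Fin d)))) w := by rw [this]
      simpa [InnerProductSpace.toDual_apply_apply] using h2.symm
    have hsplit : fderiv ℝ φ p ((1:ℝ), v)
        = fderiv ℝ φ p ((1:ℝ), (0:EuclideanSpace ℝ (Fin d))) + ⟪z, v⟫ := by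
      rw [← hinner v, ← map_add]
      norm_num
    have hgoal : HasDerivAt (fun u => φ (u, x u) - y u) (R τ) τ := by
      have := h1.sub (hy τ)
      have heq : fderiv ℝ φ p ((1:ℝ), v)
          - (f τ (x τ) - (1 / β) * elap (fun y' => φ (τ, y')) (x τ)
            - H τ (x τ) z + ⟪z, v⟫) = R τ := by
        rw [hsplit, hR τ, hderiv_t]
        ring
      rwa [heq] at this
    exact hgoal
  -- integrability of R on [0, t]
  obtain ⟨ht0, htT⟩ := ht
  have hint : IntervalIntegrable R volume 0 t := by
    apply ContinuousOn.intervalIntegrable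
    apply hRcont.mono
    rw [Set.uIcc_of_le ht0]
    exact Set.Icc_subset_Icc le_rfl htT
  have := intervalIntegral.integral_eq_sub_of_hasDerivAt
    (f := fun u => φ (u, x u) - y u) (fun τ _ => key τ) hint
  rw [this, hy0]
  ring
end

section
/- Let d be a positive natural number, β ≠ 0, and T > 0. Let φ : ℝ × ℝ^d → ℝ be differentiable (jointly in (t,x)) with x ↦ φ(t,x) twice differentiable; let H : ℝ × ℝ^d × ℝ^d → ℝ be such that p ↦ H(t,x,p) is differentiable with gradient D_p H(t,x,p); let f : ℝ × ℝ^d → ℝ; let s : ℝ × ℝ^d → ℝ^d. Let x : ℝ → ℝ^d be differentiable with x'(t) = D_p H(t, x(t), z(t)) - (1/β) s(t, x(t)) where z(t) = ∇_x φ(t, x(t)); let y : ℝ → ℝ be differentiable with y'(t) = f(t, x(t)) - (1/β) Δ_x φ(t, x(t)) - H(t, x(t), z(t)) + ⟨z(t), D_p H(t, x(t), z(t)) - (1/β) s(t, x(t))⟩. Define R(t) = ∂_t φ(t, x(t)) + (1/β) Δ_x φ(t, x(t)) + H(t, x(t), ∇_x φ(t, x(t))) - f(t, x(t)) and assume R is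 continuous on [0, T]. If φ(t, x(t)) = y(t) for all t ∈ [0, T], then R(t) = 0 for all t ∈ [0, T]; that is, the Hamilton–Jacobi–Bellman equation ∂_t φ + H(t,x,∇_x φ) + (1/β)Δ_x φ = f holds at every point (t, x(t)) of the trajectory. -/
open Real MeasureTheory
open scoped RealInnerProductSpace

/-- for the forward-backward score dynamics `(x(t), y(t))`, if
`φ(t, x(t)) = y(t)` for all `t ∈ [0,T]` (zero loss), then the HJB residual `R` vanishes
on `[0,T]`, i.e. the HJB equation holds at every point `(t, x(t))` of the trajectory. -/
theorem zero_loss_implies_hjb_residual_zero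
    (d : ℕ) (hd : 0 < d) (β T : ℝ) (hβ : β ≠ 0) (hT : 0 < T)
    (φ : ℝ × EuclideanSpace ℝ (Fin d) → ℝ)
    (hφ : Differentiable ℝ φ)
    (hφxx : ∀ t, Differentiable ℝ (fderiv ℝ (fun y => φ (t, y))))
    (H : ℝ → EuclideanSpace ℝ (Fin d) → EuclideanSpace ℝ (Fin d) → ℝ)
    (DpH : ℝ → EuclideanSpace ℝ (Fin d) → EuclideanSpace ℝ (Fin d) →
      EuclideanSpace ℝ (Fin d))
    (hH : ∀ t x p, HasGradientAt (H t x) (DpH t x p) p)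
    (f : ℝ → EuclideanSpace ℝ (Fin d) → ℝ)
    (s : ℝ → EuclideanSpace ℝ (Fin d) → EuclideanSpace ℝ (Fin d))
    (x : ℝ → EuclideanSpace ℝ (Fin d))
    (hx : ∀ t, HasDerivAt x
      (DpH t (x t) (gradient (fun y => φ (t, y)) (x t))
        - (1 / β) • s t (x t)) t)
    (y : ℝ → ℝ)
    (hy : ∀ t, HasDerivAt y
      (f t (x t) - (1 / β) * elap (fun y' => φ (t, y')) (x t)
        - H t (x t) (gradient (fun y' => φ (t, y')) (x t))
        + ⟪gradient (fun y' => φ (t, y')) (x t),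
            DpH t (x t) (gradient (fun y' => φ (t, y')) (x t))
              - (1 / β) • s t (x t)⟫) t)
    (R : ℝ → ℝ)
    (hR : ∀ t, R t = deriv (fun τ => φ (τ, x t)) t
      + (1 / β) * elap (fun y' => φ (t, y')) (x t)
      + H t (x t) (gradient (fun y' => φ (t, y')) (x t))
      - f t (x t))
    (hRcont : ContinuousOn R (Set.Icc 0 T))
    (hmatch : ∀ t ∈ Set.Icc (0:ℝ) T, φ (t, x t) = y t) :
    ∀ t ∈ Set.Icc (0:ℝ) T, R t = 0 := by
  -- notation
  intro t₀ ht₀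
  -- First: R vanishes on the open interval.
  have key : ∀ t ∈ Set.Ioo (0:ℝ) T, R t = 0 := by
    intro t ht
    set x' : EuclideanSpace ℝ (Fin d) := DpH t (x t) (gradient (fun y => φ (t, y)) (x t)) - (1 / β) • s t (x t)
      with hx'def
    -- derivative of the full composition g τ = φ (τ, x τ)
    have hF : HasDerivAt (fun τ => (τ, x τ)) ((1:ℝ), x') t :=
      (hasDerivAt_id t).prodMk (hx t)
    have hg : HasDerivAt (fun τ => φ (τ, x τ)) (fderiv ℝ φ (t, x t) (1, x')) t := by
      exact (hφ (t, x t)).hasFDerivAt.comp_hasDerivAt t hF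
    -- partial derivative in time
    have hpt : HasDerivAt (fun τ => φ (τ, x t)) (fderiv ℝ φ (t, x t) (1, 0)) t := by
      have h1 : HasDerivAt (fun τ : ℝ => (τ, x t)) ((1:ℝ), (0:EuclideanSpace ℝ (Fin d))) t :=
        (hasDerivAt_id t).prodMk (hasDerivAt_const t (x t))
      exact (hφ (t, x t)).hasFDerivAt.comp_hasDerivAt t h1
    -- partial derivative in space
    have hxfd : HasFDerivAt (fun y => φ (t, y))
        ((fderiv ℝ φ (t, x t)).comp (ContinuousLinearMap.inr ℝ ℝ (EuclideanSpace ℝ (Fin d)))) (x t) :=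
      (hφ (t, x t)).hasFDerivAt.comp (x t) (hasFDerivAt_prodMk_right t (x t))
    have hgradinner : ∀ v : EuclideanSpace ℝ (Fin d), ⟪gradient (fun y => φ (t, y)) (x t), v⟫
        = fderiv ℝ φ (t, x t) (0, v) := by
      intro v
      have h1 : fderiv ℝ (fun y => φ (t, y)) (x t)
          = (fderiv ℝ φ (t, x t)).comp (ContinuousLinearMap.inr ℝ ℝ (EuclideanSpace ℝ (Fin d))) := hxfd.fderiv
      have h2 : ⟪gradient (fun y => φ (t, y)) (x t), v⟫
          = fderiv ℝ (fun y => φ (t, y)) (x t) v := by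
        simp [gradient, real_inner_comm]
      rw [h2, h1]
      rfl
    -- split the full derivative
    have hsplit : fderiv ℝ φ (t, x t) (1, x')
        = fderiv ℝ φ (t, x t) (1, 0) + ⟪gradient (fun y => φ (t, y)) (x t), x'⟫ := by
      rw [hgradinner x']
      rw [← (fderiv ℝ φ (t, x t)).map_add]
      norm_num
    -- on a neighborhood of t, φ (τ, x τ) = y τ
    have hnbhd : Set.Icc (0:ℝ) T ∈ nhds t := Icc_mem_nhds ht.1 ht.2
    have heq : (fun τ => φ (τ, x τ)) =ᶠ[nhds t] y :=
      Filter.eventuallyEq_of_mem hnbhd (fun τ hτ => hmatch τ hτ)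
    have hg' : HasDerivAt y (fderiv ℝ φ (t, x t) (1, x')) t := by
      exact hg.congr_of_eventuallyEq heq.symm
    have hder := hg'.unique (hy t)
    -- compute R t
    have hdt : deriv (fun τ => φ (τ, x t)) t = fderiv ℝ φ (t, x t) (1, 0) := hpt.deriv
    rw [hR t, hdt]
    have : fderiv ℝ φ (t, x t) (1, 0)
        = f t (x t) - (1 / β) * elap (fun y' => φ (t, y')) (x t)
          - H t (x t) (gradient (fun y' => φ (t, y')) (x t)) := by
      have := hsplit.symm.trans hder
      linarith [this]
    rw [this]; ring
  -- Extend to the closed interval by continuity.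
  have htcl : t₀ ∈ closure (Set.Ioo (0:ℝ) T) := by
    rw [closure_Ioo hT.ne]; exact ht₀
  have hne : (nhdsWithin t₀ (Set.Ioo (0:ℝ) T)).NeBot :=
    mem_closure_iff_nhdsWithin_neBot.mp htcl
  have h1 : Filter.Tendsto R (nhdsWithin t₀ (Set.Ioo (0:ℝ) T)) (nhds (R t₀)) :=
    ((hRcont t₀ ht₀).mono Set.Ioo_subset_Icc_self)
  have h2 : Filter.Tendsto R (nhdsWithin t₀ (Set.Ioo (0:ℝ) T)) (nhds 0) := by
    apply Filter.Tendsto.congr' _ tendsto_const_nhds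
    filter_upwards [self_mem_nhdsWithin] with τ hτ
    exact (key τ hτ).symm
  exact tendsto_nhds_unique h1 h2
end

section
/- Let d be a positive natural number and let α, γ > 0 satisfy α² + γα = 1. Define φ : ℝ × ℝ^d → ℝ by φ(t,x) = (d·α + (γ·d/2)·log(α/(2π)))·t - α·‖x‖²/2 and ρ : ℝ^d → ℝ by ρ(x) = (α/(2π))^{d/2}·exp(-α·‖x‖²/2). Then for all t ∈ ℝ and x ∈ ℝ^d, ∂_t φ(t,x) + Δ_x φ(t,x) + (1/2)‖∇_x φ(t,x)‖² - (1/2)‖x‖² - γ·log ρ(x) = 0. -/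
open Real
open scoped RealInnerProductSpace

variable {d : ℕ}

local notation "E" => EuclideanSpace ℝ (Fin d)

lemma hasFDerivAt_phi (c α : ℝ) (x : E) :
    HasFDerivAt (fun y : E => c - α * ‖y‖ ^ 2 / 2) ((-α) • innerSL ℝ x) x := by
  have h := (hasStrictFDerivAt_norm_sq x).hasFDerivAt
  have h2 : HasFDerivAt (fun y : E => c - α * ‖y‖ ^ 2 / 2)
      (((-α/2) • (2 • innerSL ℝ x)) : E →L[ℝ] ℝ) x := by
    have := (h.const_smul (-α/2)).const_add c
    exact this.congr_of_eventuallyEq (Filter.Eventually.of_forall fun y => by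
      simp only [Pi.smul_apply, smul_eq_mul]; ring)
  suffices e : ((-α) • innerSL ℝ x : E →L[ℝ] ℝ) = (-α/2) • (2 • innerSL ℝ x) by
    rw [e]; exact h2
  ext y
  simp
  ring

lemma gradient_phi (c α : ℝ) (x : E) :
    gradient (fun y : E => c - α * ‖y‖ ^ 2 / 2) x = (-α) • x := by
  have : HasGradientAt (fun y : E => c - α * ‖y‖ ^ 2 / 2) ((-α) • x) x := by
    rw [hasGradientAt_iff_hasFDerivAt]
    suffices e : (InnerProductSpace.toDual ℝ E ((-α) • x) : E →L[ℝ] ℝ)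
        = ((-α) • innerSL ℝ x : E →L[ℝ] ℝ) by
      rw [e]; exact hasFDerivAt_phi c α x
    ext y
    simp [real_inner_smul_left]
  exact this.gradient

lemma fderiv_phi (c α : ℝ) (x : E) :
    fderiv ℝ (fun y : E => c - α * ‖y‖ ^ 2 / 2) x = (-α) • innerSL ℝ x :=
  (hasFDerivAt_phi c α x).fderiv

lemma elap_phi (c α : ℝ) (x : E) :
    elap (fun y : E => c - α * ‖y‖ ^ 2 / 2) x = -α * d := by
  unfold elap
  have h1 : ∀ i : Fin d,
      (fun y : E => fderiv ℝ (fun y : E => c - α * ‖y‖ ^ 2 / 2) y (EuclideanSpace.single i 1))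
        = fun y : E => ((-α) • innerSL ℝ (EuclideanSpace.single i 1)) y := by
    intro i
    funext y
    rw [fderiv_phi]
    simp [real_inner_comm]
  have h2 : ∀ i : Fin d,
      fderiv ℝ (fun y : E => ((-α) • innerSL ℝ (EuclideanSpace.single i 1) : E →L[ℝ] ℝ) y) x
        = ((-α) • innerSL ℝ (EuclideanSpace.single i 1) : E →L[ℝ] ℝ) := by
    intro i
    exact ContinuousLinearMap.fderiv _
  calc (∑ i, fderiv ℝ (fun y => fderiv ℝ (fun y : E => c - α * ‖y‖ ^ 2 / 2) y
          (EuclideanSpace.single i 1)) x (EuclideanSpace.single i 1))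
      = ∑ i : Fin d, (-α) * ⟪(EuclideanSpace.single i 1 : E), EuclideanSpace.single i 1⟫ := by
        refine Finset.sum_congr rfl fun i _ => ?_
        rw [h1 i, h2 i]
        simp
    _ = -α * d := by
        simp [real_inner_self_eq_norm_sq, EuclideanSpace.norm_single]; ring

/-- the pair
`φ(t,x) = (dα + (γd/2) log(α/(2π))) t - α‖x‖²/2`,
`ρ(x) = (α/(2π))^{d/2} exp(-α‖x‖²/2)` with `α² + γα = 1` solves the HJB equation
`∂_t φ + Δ_x φ + (1/2)‖∇_x φ‖² - (1/2)‖x‖² - γ log ρ = 0` of the MFC problem with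
entropy potential energy. -/
theorem entropy_potential_hjb_solution
    (d : ℕ) (hd : 0 < d) (α γ : ℝ) (hα : 0 < α) (hγ : 0 < γ)
    (hαγ : α ^ 2 + γ * α = 1)
    (φ : ℝ → EuclideanSpace ℝ (Fin d) → ℝ)
    (hφ : φ = fun t x =>
      ((d : ℝ) * α + (γ * (d : ℝ) / 2) * Real.log (α / (2 * π))) * t
        - α * ‖x‖ ^ 2 / 2)
    (ρ : EuclideanSpace ℝ (Fin d) → ℝ)
    (hρ : ρ = fun x =>
      (α / (2 * π)) ^ ((d : ℝ) / 2) * Real.exp (-α * ‖x‖ ^ 2 / 2)) :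
    ∀ (t : ℝ) (x : EuclideanSpace ℝ (Fin d)),
      deriv (fun τ => φ τ x) t + elap (φ t) x
        + (1 / 2) * ‖gradient (φ t) x‖ ^ 2
        - (1 / 2) * ‖x‖ ^ 2 - γ * Real.log (ρ x) = 0 := by

  subst hφ hρ
  intro t x
  set C : ℝ := (d : ℝ) * α + (γ * (d : ℝ) / 2) * Real.log (α / (2 * π)) with hC
  have hbase : (0 : ℝ) < α / (2 * π) := by positivity
  have hderiv : deriv (fun τ => C * τ - α * ‖x‖ ^ 2 / 2) t = C := by
    have : HasDerivAt (fun τ => C * τ - α * ‖x‖ ^ 2 / 2) C t := by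
      simpa using ((hasDerivAt_id t).const_mul C).sub_const (α * ‖x‖ ^ 2 / 2)
    exact this.deriv
  rw [hderiv]
  rw [show elap (fun y : EuclideanSpace ℝ (Fin d) => C * t - α * ‖y‖ ^ 2 / 2) x = -α * d from
    elap_phi (C * t) α x]
  rw [show gradient (fun y : EuclideanSpace ℝ (Fin d) => C * t - α * ‖y‖ ^ 2 / 2) x = (-α) • x from
    gradient_phi (C * t) α x]
  rw [norm_smul]
  have hlog : Real.log ((α / (2 * π)) ^ ((d : ℝ) / 2) * Real.exp (-α * ‖x‖ ^ 2 / 2))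
      = (d : ℝ) / 2 * Real.log (α / (2 * π)) + (-α * ‖x‖ ^ 2 / 2) := by
    rw [Real.log_mul (by positivity) (Real.exp_ne_zero _), Real.log_rpow hbase, Real.log_exp]
  rw [hlog]
  have h2 : ‖(-α : ℝ)‖ = α := by rw [Real.norm_eq_abs, abs_neg, abs_of_pos hα]
  rw [h2, hC]
  nlinarith [sq_nonneg (‖x‖ : ℝ), hαγ]
end

section
/- Let d be a positive natural number, β > 0, and T > 0. Define ρ* : ℝ × ℝ^d → ℝ by ρ*(t,x) = (4π(T - t + 1)/β)^{-d/2}·exp(-β‖x‖²/(4(T - t + 1))) and φ : ℝ × ℝ^d → ℝ by φ(t,x) = -(d/β)·log(T - t + 1) - ‖x‖²/(2(T - t + 1)), so that ∇_x φ(t,x) = -x/(T - t + 1). Then for every t ∈ ℝ with T - t + 1 > 0 and every x ∈ ℝ^d, ∂_t ρ*(t,x) + div_x(y ↦ ρ*(t,y) • ∇_x φ(t,y))(x) = (1/β)·Δ_x ρ*(t,x). -/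
open Real
open scoped RealInnerProductSpace

lemma aux_gauss_fd {d : ℕ} (C a : ℝ) (y : EuclideanSpace ℝ (Fin d)) :
    HasFDerivAt (fun z : EuclideanSpace ℝ (Fin d) => C * Real.exp (a * ‖z‖ ^ 2))
      ((C * Real.exp (a * ‖y‖ ^ 2) * (2 * a)) • innerSL ℝ y) y := by
  have h1 : HasFDerivAt (fun z : EuclideanSpace ℝ (Fin d) => ‖z‖ ^ 2)
      ((2:ℝ) • innerSL ℝ y) y := by
    have := (hasStrictFDerivAt_norm_sq y).hasFDerivAt
    refine this.congr_fderiv ?_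
    ext v
    simp
  have h2 := (h1.const_mul a).exp.const_mul C
  refine h2.congr_fderiv ?_
  ext v
  simp [mul_comm, mul_assoc, mul_left_comm]

lemma aux_grad {d : ℕ} (c s : ℝ) (hs : s ≠ 0) (y : EuclideanSpace ℝ (Fin d)) :
    gradient (fun z : EuclideanSpace ℝ (Fin d) => c - ‖z‖ ^ 2 / (2 * s)) y
      = (-s⁻¹) • y := by
  have hf : (fun z : EuclideanSpace ℝ (Fin d) => c - ‖z‖ ^ 2 / (2 * s))
      = fun z => c - (2 * s)⁻¹ * ‖z‖ ^ 2 := by funext z; ring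
  rw [hf]
  apply HasGradientAt.gradient
  rw [hasGradientAt_iff_hasFDerivAt]
  have h1 : HasFDerivAt (fun z : EuclideanSpace ℝ (Fin d) => ‖z‖ ^ 2)
      ((2:ℝ) • innerSL ℝ y) y := by
    have := (hasStrictFDerivAt_norm_sq y).hasFDerivAt
    refine this.congr_fderiv ?_; ext v; simp
  have h2 := (hasFDerivAt_const c y).sub (h1.const_mul (2 * s)⁻¹)
  refine h2.congr_fderiv ?_
  ext v
  simp [InnerProductSpace.toDual_apply_apply, real_inner_smul_left]
  field_simp

lemma aux_sum_sq {d : ℕ} (x : EuclideanSpace ℝ (Fin d)) :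
    ∑ i, x i * x i = ‖x‖ ^ 2 := by
  rw [EuclideanSpace.norm_sq_eq]
  congr 1; ext i; rw [Real.norm_eq_abs, sq_abs, sq]

/-- the Gaussian density
`ρ*(t,x) = (4π(T-t+1)/β)^{-d/2} exp(-β‖x‖²/(4(T-t+1)))` together with
`φ(t,x) = -(d/β) log(T-t+1) - ‖x‖²/(2(T-t+1))` (so `∇_x φ(t,x) = -x/(T-t+1)`) solves the
Fokker–Planck equation `∂_t ρ* + div_x(ρ* ∇_x φ) = (1/β) Δ_x ρ*` for all `t` with
`T - t + 1 > 0`. -/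
theorem lq_fokker_planck_solution
    (d : ℕ) (hd : 0 < d) (β T : ℝ) (hβ : 0 < β) (hT : 0 < T)
    (ρstar : ℝ → EuclideanSpace ℝ (Fin d) → ℝ)
    (hρstar : ρstar = fun t x =>
      (4 * π * (T - t + 1) / β) ^ (-(d : ℝ) / 2)
        * Real.exp (-β * ‖x‖ ^ 2 / (4 * (T - t + 1))))
    (φ : ℝ → EuclideanSpace ℝ (Fin d) → ℝ)
    (hφ : φ = fun t x =>
      -((d : ℝ) / β) * Real.log (T - t + 1) - ‖x‖ ^ 2 / (2 * (T - t + 1))) :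
    ∀ t : ℝ, T - t + 1 > 0 →
      ∀ x : EuclideanSpace ℝ (Fin d),
        deriv (fun τ => ρstar τ x) t
          + ediv (fun y => ρstar t y • gradient (φ t) y) x
          = (1 / β) * elap (ρstar t) x := by
  intro t hs x
  have hsne : T - t + 1 ≠ 0 := ne_of_gt hs
  have hβne : β ≠ 0 := ne_of_gt hβ
  simp only [hρstar, hφ]
  -- abbreviations (plain terms, no `set`)
  -- rewrite the gradient
  have hgrad : ∀ y : EuclideanSpace ℝ (Fin d),
      gradient (fun z : EuclideanSpace ℝ (Fin d) =>
        -((d : ℝ) / β) * Real.log (T - t + 1) - ‖z‖ ^ 2 / (2 * (T - t + 1))) y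
        = (-(T - t + 1)⁻¹) • y := fun y => aux_grad _ _ hsne y
  simp only [hgrad]
  -- rewrite the exponent into `a * ‖y‖ ^ 2` form (only in the x-slice terms)
  have hexpfun : ∀ y : EuclideanSpace ℝ (Fin d),
      -β * ‖y‖ ^ 2 / (4 * (T - t + 1)) = (-β / (4 * (T - t + 1))) * ‖y‖ ^ 2 := by
    intro y; ring
  -- time derivative
  have hu : HasDerivAt (fun τ : ℝ => T - τ + 1) (-1) t := by
    simpa using ((hasDerivAt_id t).const_sub T).add_const 1
  have hb : HasDerivAt (fun τ : ℝ => 4 * π * (T - τ + 1) / β) (4 * π * (-1) / β) t := by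
    simpa using (HasDerivAt.const_mul (4 * π) hu).div_const β
  have hBpos : (0:ℝ) < 4 * π * (T - t + 1) / β := by positivity
  have hCd : HasDerivAt (fun τ : ℝ => (4 * π * (T - τ + 1) / β) ^ (-(d : ℝ) / 2))
      ((4 * π * (-1) / β) * (-(d : ℝ) / 2)
        * (4 * π * (T - t + 1) / β) ^ (-(d : ℝ) / 2 - 1)) t :=
    hb.rpow_const (Or.inl hBpos.ne')
  have hfun2 : (fun τ : ℝ => -β * ‖x‖ ^ 2 / (4 * (T - τ + 1)))
      = fun τ : ℝ => (-β * ‖x‖ ^ 2 / 4) * (T - τ + 1)⁻¹ := by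
    funext τ; rw [← div_div, div_eq_mul_inv]
  have hinv : HasDerivAt (fun τ : ℝ => (T - τ + 1)⁻¹) (-(-1) / (T - t + 1) ^ 2) t :=
    hu.inv hsne
  have hE : HasDerivAt (fun τ : ℝ => -β * ‖x‖ ^ 2 / (4 * (T - τ + 1)))
      ((-β * ‖x‖ ^ 2 / 4) * (-(-1) / (T - t + 1) ^ 2)) t := by
    rw [hfun2]; exact HasDerivAt.const_mul _ hinv
  have hDt := hCd.mul hE.exp
  rw [HasDerivAt.deriv (f := fun τ : ℝ => (4 * π * (T - τ + 1) / β) ^ (-(d : ℝ) / 2)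
    * Real.exp (-β * ‖x‖ ^ 2 / (4 * (T - τ + 1)))) hDt]
  -- divergence term
  have hF : HasFDerivAt (fun y : EuclideanSpace ℝ (Fin d) =>
      ((4 * π * (T - t + 1) / β) ^ (-(d : ℝ) / 2)
        * Real.exp (-β / (4 * (T - t + 1)) * ‖y‖ ^ 2)) • ((-(T - t + 1)⁻¹) • y))
      (((4 * π * (T - t + 1) / β) ^ (-(d : ℝ) / 2)
        * Real.exp (-β / (4 * (T - t + 1)) * ‖x‖ ^ 2))
          • ((-(T - t + 1)⁻¹) • ContinuousLinearMap.id ℝ (EuclideanSpace ℝ (Fin d)))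
        + (((4 * π * (T - t + 1) / β) ^ (-(d : ℝ) / 2)
            * Real.exp (-β / (4 * (T - t + 1)) * ‖x‖ ^ 2)
            * (2 * (-β / (4 * (T - t + 1))))) • innerSL ℝ x).smulRight
          ((-(T - t + 1)⁻¹) • x)) x :=
    (aux_gauss_fd _ _ x).smul (show HasFDerivAt (fun y : EuclideanSpace ℝ (Fin d) => (-(T - t + 1)⁻¹) • y)
      ((-(T - t + 1)⁻¹) • ContinuousLinearMap.id ℝ (EuclideanSpace ℝ (Fin d))) x from
        (hasFDerivAt_id x).const_smul (-(T - t + 1)⁻¹))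
  have hediv : ediv (fun y : EuclideanSpace ℝ (Fin d) =>
      ((4 * π * (T - t + 1) / β) ^ (-(d : ℝ) / 2)
        * Real.exp (-β / (4 * (T - t + 1)) * ‖y‖ ^ 2)) • ((-(T - t + 1)⁻¹) • y)) x
      = ((4 * π * (T - t + 1) / β) ^ (-(d : ℝ) / 2)
          * Real.exp (-β / (4 * (T - t + 1)) * ‖x‖ ^ 2))
        * ((-(T - t + 1)⁻¹) * d
          + 2 * (-β / (4 * (T - t + 1))) * (-(T - t + 1)⁻¹) * ‖x‖ ^ 2) := by
    unfold ediv
    rw [hF.fderiv]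
    simp only [ContinuousLinearMap.add_apply, ContinuousLinearMap.coe_smul',
      Pi.smul_apply, ContinuousLinearMap.smulRight_apply, ContinuousLinearMap.id_apply,
      innerSL_apply_apply, EuclideanSpace.inner_single_right, PiLp.add_apply, PiLp.smul_apply,
      smul_eq_mul, map_one, conj_trivial, one_mul, EuclideanSpace.single_apply, if_pos,
      mul_one, Finset.sum_add_distrib]
    rw [Finset.sum_const, Finset.card_univ, Fintype.card_fin, nsmul_eq_mul]
    have hterm : ∀ i : Fin d,
        (4 * π * (T - t + 1) / β) ^ (-(d : ℝ) / 2)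
            * rexp (-β / (4 * (T - t + 1)) * ‖x‖ ^ 2) * (2 * (-β / (4 * (T - t + 1))))
            * x i * (-(T - t + 1)⁻¹ * x i)
          = ((4 * π * (T - t + 1) / β) ^ (-(d : ℝ) / 2)
            * rexp (-β / (4 * (T - t + 1)) * ‖x‖ ^ 2) * (2 * (-β / (4 * (T - t + 1))))
            * -(T - t + 1)⁻¹) * (x i * x i) := by
      intro i; ring
    rw [Finset.sum_congr rfl fun i _ => hterm i, ← Finset.mul_sum, aux_sum_sq]
    ring
  -- Laplacian term
  have hlapinner : ∀ i : Fin d,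
      (fun y : EuclideanSpace ℝ (Fin d) => fderiv ℝ
          (fun z : EuclideanSpace ℝ (Fin d) =>
            (4 * π * (T - t + 1) / β) ^ (-(d : ℝ) / 2)
              * Real.exp (-β / (4 * (T - t + 1)) * ‖z‖ ^ 2)) y (EuclideanSpace.single i 1))
        = fun y : EuclideanSpace ℝ (Fin d) =>
            ((4 * π * (T - t + 1) / β) ^ (-(d : ℝ) / 2)
              * Real.exp (-β / (4 * (T - t + 1)) * ‖y‖ ^ 2)
              * (2 * (-β / (4 * (T - t + 1))))) * y i := by
    intro i; funext y
    rw [(aux_gauss_fd _ _ y).fderiv]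
    simp [EuclideanSpace.inner_single_right]
  have helap : elap (fun y : EuclideanSpace ℝ (Fin d) =>
      (4 * π * (T - t + 1) / β) ^ (-(d : ℝ) / 2)
        * Real.exp (-β / (4 * (T - t + 1)) * ‖y‖ ^ 2)) x
      = ((4 * π * (T - t + 1) / β) ^ (-(d : ℝ) / 2)
          * Real.exp (-β / (4 * (T - t + 1)) * ‖x‖ ^ 2))
        * (2 * (-β / (4 * (T - t + 1))) * d
          + 4 * (-β / (4 * (T - t + 1))) ^ 2 * ‖x‖ ^ 2) := by
    unfold elap
    simp only [hlapinner]
    have hgi : ∀ i : Fin d, HasFDerivAt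
        (fun y : EuclideanSpace ℝ (Fin d) =>
          ((4 * π * (T - t + 1) / β) ^ (-(d : ℝ) / 2)
            * Real.exp (-β / (4 * (T - t + 1)) * ‖y‖ ^ 2)
            * (2 * (-β / (4 * (T - t + 1))))) * y i)
        (((4 * π * (T - t + 1) / β) ^ (-(d : ℝ) / 2)
            * Real.exp (-β / (4 * (T - t + 1)) * ‖x‖ ^ 2)
            * (2 * (-β / (4 * (T - t + 1))))) • EuclideanSpace.proj (𝕜 := ℝ) i
          + x i • ((2 * (-β / (4 * (T - t + 1)))) •
            (((4 * π * (T - t + 1) / β) ^ (-(d : ℝ) / 2)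
              * Real.exp (-β / (4 * (T - t + 1)) * ‖x‖ ^ 2)
              * (2 * (-β / (4 * (T - t + 1))))) • innerSL ℝ x))) x :=
      fun i => ((aux_gauss_fd _ _ x).mul_const _).mul
        ((EuclideanSpace.proj (𝕜 := ℝ) i).hasFDerivAt)
    have hfd : ∀ i : Fin d, fderiv ℝ
        (fun y : EuclideanSpace ℝ (Fin d) =>
          ((4 * π * (T - t + 1) / β) ^ (-(d : ℝ) / 2)
            * Real.exp (-β / (4 * (T - t + 1)) * ‖y‖ ^ 2)
            * (2 * (-β / (4 * (T - t + 1))))) * y i) x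
        = (((4 * π * (T - t + 1) / β) ^ (-(d : ℝ) / 2)
            * Real.exp (-β / (4 * (T - t + 1)) * ‖x‖ ^ 2)
            * (2 * (-β / (4 * (T - t + 1))))) • EuclideanSpace.proj (𝕜 := ℝ) i
          + x i • ((2 * (-β / (4 * (T - t + 1)))) •
            (((4 * π * (T - t + 1) / β) ^ (-(d : ℝ) / 2)
              * Real.exp (-β / (4 * (T - t + 1)) * ‖x‖ ^ 2)
              * (2 * (-β / (4 * (T - t + 1))))) • innerSL ℝ x))) :=
      fun i => (hgi i).fderiv
    simp only [hfd]
    simp only [ContinuousLinearMap.add_apply, ContinuousLinearMap.coe_smul',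
      Pi.smul_apply, PiLp.proj_apply, innerSL_apply_apply,
      EuclideanSpace.inner_single_right, EuclideanSpace.single_apply, if_pos,
      smul_eq_mul, map_one, conj_trivial, one_mul, mul_one, Finset.sum_add_distrib]
    rw [Finset.sum_const, Finset.card_univ, Fintype.card_fin, nsmul_eq_mul]
    have hterm : ∀ i : Fin d,
        x i * (2 * (-β / (4 * (T - t + 1)))
          * ((4 * π * (T - t + 1) / β) ^ (-(d : ℝ) / 2)
            * rexp (-β / (4 * (T - t + 1)) * ‖x‖ ^ 2)
            * (2 * (-β / (4 * (T - t + 1)))) * x i))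
          = ((2 * (-β / (4 * (T - t + 1))))
              * ((4 * π * (T - t + 1) / β) ^ (-(d : ℝ) / 2)
                * rexp (-β / (4 * (T - t + 1)) * ‖x‖ ^ 2)
                * (2 * (-β / (4 * (T - t + 1)))))) * (x i * x i) := by
      intro i; ring
    rw [Finset.sum_congr rfl fun i _ => hterm i, ← Finset.mul_sum, aux_sum_sq]
    ring
  simp only [hexpfun]
  rw [hediv, helap]
  rw [show (-(d : ℝ) / 2 - 1) = -(d : ℝ) / 2 - 1 from rfl, Real.rpow_sub hBpos,
    Real.rpow_one]
  have hπ : π ≠ 0 := Real.pi_ne_zero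
  field_simp
  ring
end

section
/- Let d be a positive natural number, β ≠ 0, and T > 0. Let φ, ρ : ℝ × ℝ^d → ℝ be twice continuously differentiable (jointly in (t,x)) and let v : ℝ × ℝ^d → ℝ^d be continuously differentiable. Suppose there is a compact set K ⊆ ℝ^d such that ρ(t,x) = 0 whenever t ∈ [0,T] and x ∉ K. Then ∫₀ᵀ ∫_{ℝ^d} φ(t,x)·(∂_t ρ(t,x) + div_x(y ↦ ρ(t,y) • v(t,y))(x) - (1/β)Δ_x ρ(t,x)) dx dt = -∫₀ᵀ ∫_{ℝ^d} ρ(t,x)·(∂_t φ(t,x) + ⟨v(t,x), ∇_x φ(t,x)⟩ + (1/β)Δ_x φ(t,x)) dx dt + ∫_{ℝ^d} φ(T,x)·ρ(T,x) dx - ∫_{ℝ^d} φ(0,x)·ρ(0,x) dx. -/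
open Real MeasureTheory
open scoped RealInnerProductSpace
open Metric Set Filter

namespace MFC

variable {d : ℕ}
local notation "E" => EuclideanSpace ℝ (Fin d)

lemma clm_decomp (L : EuclideanSpace ℝ (Fin d) →L[ℝ] ℝ) (y : E) :
    L y = ∑ i, y i * L (EuclideanSpace.single i 1) := by
  have hy : y = ∑ i, y i • (EuclideanSpace.single i (1:ℝ)) := by
    have := (EuclideanSpace.basisFun (Fin d) ℝ).sum_repr y
    simp only [EuclideanSpace.basisFun_apply, EuclideanSpace.basisFun_repr] at this
    exact this.symm
  conv_lhs => rw [hy]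
  rw [map_sum]
  simp

variable {F' : Type*} [NormedAddCommGroup F'] [NormedSpace ℝ F']

lemma contDiff_slice {n : ℕ∞} {h : ℝ × E → F'} (hh : ContDiff ℝ n h) (t : ℝ) :
    ContDiff ℝ n (fun y : E => h (t, y)) :=
  hh.comp (contDiff_const.prodMk contDiff_id)

lemma fderiv_slice {h : ℝ × E → F'} (hd : Differentiable ℝ h) (t : ℝ) (x : E) :
    fderiv ℝ (fun y : E => h (t, y)) x
      = (fderiv ℝ h (t, x)).comp (ContinuousLinearMap.inr ℝ ℝ (EuclideanSpace ℝ (Fin d))) :=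
  ((hd (t, x)).hasFDerivAt.comp x (hasFDerivAt_prodMk_right t x)).fderiv

lemma hasDerivAt_time {h : ℝ × E → ℝ} (hd : Differentiable ℝ h) (t : ℝ) (x : E) :
    HasDerivAt (fun τ => h (τ, x)) (fderiv ℝ h (t, x) (1, 0)) t := by
  have h1 : HasDerivAt (fun τ : ℝ => ((τ, x) : ℝ × E)) (1, 0) t :=
    (hasDerivAt_id t).prodMk (hasDerivAt_const t x)
  exact (hd (t, x)).hasFDerivAt.comp_hasDerivAt t h1

lemma fderiv2_slice {h : ℝ × E → ℝ} (hh : ContDiff ℝ 2 h) (t : ℝ) (x : E) (w w' : E) :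
    fderiv ℝ (fun y : E => fderiv ℝ (fun z : E => h (t, z)) y w) x w'
      = fderiv ℝ (fderiv ℝ h) (t, x) (0, w') (0, w) := by
  have hd : Differentiable ℝ h := hh.differentiable two_ne_zero
  have hfd : Differentiable ℝ (fderiv ℝ h) :=
    (hh.fderiv_right (m := 1) le_rfl).differentiable one_ne_zero
  have e1 : (fun y : E => fderiv ℝ (fun z : E => h (t, z)) y w)
      = fun y : E => fderiv ℝ h (t, y) (0, w) := by
    funext y
    rw [fderiv_slice hd]
    rfl
  rw [e1]
  have h2 : HasFDerivAt (fun y : E => fderiv ℝ h (t, y))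
      ((fderiv ℝ (fderiv ℝ h) (t, x)).comp
        (ContinuousLinearMap.inr ℝ ℝ (EuclideanSpace ℝ (Fin d)))) x :=
    (hfd (t, x)).hasFDerivAt.comp x (hasFDerivAt_prodMk_right t x)
  have h3 := ((ContinuousLinearMap.apply ℝ ℝ ((0, w) : ℝ × E)).hasFDerivAt
    (x := fderiv ℝ h (t, x))).comp x h2
  have := h3.fderiv
  rw [show ((ContinuousLinearMap.apply ℝ ℝ ((0, w) : ℝ × E)) ∘ fun y : E => fderiv ℝ h (t, y))
      = fun y : E => fderiv ℝ h (t, y) (0, w) from rfl] at this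
  rw [this]
  rfl

lemma cont_param_integral {F : ℝ × E → ℝ} (hF : Continuous F) {K : Set E} (hK : IsCompact K)
    (h0 : ∀ t x, x ∉ K → F (t, x) = 0) : Continuous fun t => ∫ x, F (t, x) := by
  rw [continuous_iff_continuousAt]
  intro t₀
  obtain ⟨M, hM⟩ := ((isCompact_Icc (a := t₀ - 1) (b := t₀ + 1)).prod hK).exists_bound_of_continuousOn
    hF.continuousOn
  apply continuousAt_of_dominated (bound := K.indicator fun _ => M)
  · exact Eventually.of_forall fun t =>
      (hF.comp (continuous_const.prodMk continuous_id)).aestronglyMeasurable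
  · filter_upwards [Icc_mem_nhds (by linarith : t₀ - 1 < t₀) (by linarith : t₀ < t₀ + 1)] with t ht
    apply Eventually.of_forall
    intro x
    by_cases hx : x ∈ K
    · simpa [indicator_of_mem hx] using hM (t, x) ⟨ht, hx⟩
    · simp [h0 t x hx, indicator_of_notMem hx]
  · rw [integrable_indicator_iff hK.measurableSet]
    exact integrableOn_const hK.measure_lt_top.ne
  · exact Eventually.of_forall fun x =>
      (hF.comp (continuous_id.prodMk continuous_const)).continuousAt

lemma integrable_of_zero_off {f : E → ℝ} (hf : Continuous f) {K : Set E} (hK : IsCompact K)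
    (h0 : ∀ x ∉ K, f x = 0) : Integrable f :=
  hf.integrable_of_hasCompactSupport (HasCompactSupport.intro hK h0)

lemma integrable_prod {T : ℝ} (hT : 0 < T) {F : ℝ × E → ℝ} (hF : Continuous F)
    {K : Set E} (hK : IsCompact K) (h0 : ∀ t x, x ∉ K → F (t, x) = 0) :
    Integrable F ((volume.restrict (Ioc 0 T)).prod volume) := by
  obtain ⟨M, hM⟩ := ((isCompact_Icc (a := (0:ℝ)) (b := T)).prod hK).exists_bound_of_continuousOn
    hF.continuousOn
  refine Integrable.mono' (g := (Icc 0 T ×ˢ K).indicator fun _ => M) ?_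
    hF.aestronglyMeasurable ?_
  · rw [integrable_indicator_iff (measurableSet_Icc.prod hK.measurableSet)]
    refine integrableOn_const (LT.lt.ne ?_)
    rw [Measure.prod_prod]
    refine ENNReal.mul_lt_top ?_ hK.measure_lt_top
    rw [Measure.restrict_apply measurableSet_Icc]
    exact lt_of_le_of_lt (measure_mono inter_subset_left) isCompact_Icc.measure_lt_top
  · have hrw : (volume.restrict (Ioc (0:ℝ) T)).prod (volume : Measure E)
        = ((volume : Measure ℝ).prod (volume : Measure E)).restrict ((Ioc 0 T) ×ˢ univ) := by
      rw [← Measure.prod_restrict, Measure.restrict_univ]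
    rw [hrw]
    filter_upwards [ae_restrict_mem (measurableSet_Ioc.prod MeasurableSet.univ)] with p hp
    rcases p with ⟨t, x⟩
    by_cases hx : x ∈ K
    · have : (t, x) ∈ Icc (0:ℝ) T ×ˢ K := ⟨Ioc_subset_Icc_self hp.1, hx⟩
      simpa [indicator_of_mem this] using hM (t, x) this
    · have : (t, x) ∉ Icc (0:ℝ) T ×ˢ K := fun h => hx h.2
      simp [h0 t x hx, indicator_of_notMem this]



theorem ibp_core (f g : E → ℝ) (hf : ContDiff ℝ 1 f) (hg : ContDiff ℝ 1 g)
    (hgs : HasCompactSupport g) (w : E) :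
    ∫ x, fderiv ℝ f x w * g x = -∫ x, fderiv ℝ g x w * f x := by
  -- choose R with tsupport g ⊆ ball 0 R
  obtain ⟨R, hR0, hRsub⟩ : ∃ R, 0 < R ∧ tsupport g ⊆ ball (0:E) R :=
    hgs.isBounded.subset_ball_lt 0 0
  -- bump function
  have hlt1 : (R+1 : ℝ) < R+2 := by linarith
  let χ : ContDiffBump (0:E) := ⟨R+1, R+2, by linarith, hlt1⟩
  set F : E → ℝ := fun x => χ x * f x with hF
  have hχc : ContDiff ℝ 1 (fun x => (χ x : ℝ)) := χ.contDiff
  have hFc : ContDiff ℝ 1 F := hχc.mul hf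
  have hFs : HasCompactSupport F := χ.hasCompactSupport.mul_right
  have hgc1 : Continuous g := hg.continuous
  -- Lipschitz from C¹ + compact support
  have lip : ∀ (h : E → ℝ), ContDiff ℝ 1 h → HasCompactSupport h → ∃ C, LipschitzWith C h := by
    intro h hh hhs
    have hd : Differentiable ℝ h := hh.differentiable one_ne_zero
    have hcont : Continuous fun x => fderiv ℝ h x := hh.continuous_fderiv one_ne_zero
    have hsupp : HasCompactSupport fun x => fderiv ℝ h x := hhs.fderiv (𝕜 := ℝ)
    obtain ⟨C, hC⟩ := hsupp.exists_bound_of_continuous hcont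
    refine ⟨⟨max C 0, le_max_right _ _⟩, lipschitzWith_of_nnnorm_fderiv_le hd fun x => ?_⟩
    have := hC x
    show (‖fderiv ℝ h x‖₊ : ℝ) ≤ max C 0
    exact le_trans this (le_max_left _ _)
  obtain ⟨C₁, hlip₁⟩ := lip F hFc hFs
  obtain ⟨C₂, hlip₂⟩ := lip g hg hgs
  have key := LipschitzWith.integral_lineDeriv_mul_eq (μ := volume) hlip₁ hlip₂ hgs w
  have hFd : Differentiable ℝ F := hFc.differentiable one_ne_zero
  have hgd : Differentiable ℝ g := hg.differentiable one_ne_zero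
  simp_rw [(hFd _).lineDeriv_eq_fderiv,
    (hgd _).lineDeriv_eq_fderiv, map_neg] at key
  have e1 : ∀ x : E, fderiv ℝ F x w * g x = fderiv ℝ f x w * g x := by
    intro x
    by_cases hx : x ∈ ball (0:E) (R+1)
    · have hev : F =ᶠ[nhds x] f := by
        filter_upwards [isOpen_ball.mem_nhds hx] with y hy
        have : χ y = 1 := χ.one_of_mem_closedBall (ball_subset_closedBall hy)
        simp [hF, this]
      rw [hev.fderiv_eq]
    · have hxg : x ∉ tsupport g := fun h => hx (ball_subset_ball (by linarith) (hRsub h))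
      have hgz : g =ᶠ[nhds x] 0 :=
        Filter.eventuallyEq_of_mem (isClosed_tsupport g |>.isOpen_compl.mem_nhds hxg)
          fun y hy => image_eq_zero_of_notMem_tsupport hy
      simp [hgz.self_of_nhds]
  have e2 : ∀ x : E, -fderiv ℝ g x w * F x = -(fderiv ℝ g x w * f x) := by
    intro x
    by_cases hx : x ∈ ball (0:E) (R+1)
    · have : χ x = 1 := χ.one_of_mem_closedBall (ball_subset_closedBall hx)
      simp [hF, this]
    · have hxg : x ∉ tsupport g := fun h => hx (ball_subset_ball (by linarith) (hRsub h))
      have hgz : g =ᶠ[nhds x] 0 :=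
        Filter.eventuallyEq_of_mem (isClosed_tsupport g |>.isOpen_compl.mem_nhds hxg)
          fun y hy => image_eq_zero_of_notMem_tsupport hy
      have : fderiv ℝ g x = fderiv ℝ (fun _ : E => (0:ℝ)) x := hgz.fderiv_eq
      simp [this]
  simp_rw [e1, e2] at key
  rw [key, integral_neg]


lemma ibp_mul (f g : E → ℝ) (hf : ContDiff ℝ 1 f) (hg : ContDiff ℝ 1 g)
    (hgs : HasCompactSupport g) (w : E) :
    ∫ x, f x * fderiv ℝ g x w = -∫ x, g x * fderiv ℝ f x w := by
  have h := ibp_core f g hf hg hgs w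
  have h1 : ∫ x, f x * fderiv ℝ g x w = ∫ x, fderiv ℝ g x w * f x := by simp_rw [mul_comm]
  have h2 : ∫ x, g x * fderiv ℝ f x w = ∫ x, fderiv ℝ f x w * g x := by simp_rw [mul_comm]
  rw [h1, h2]
  linarith

lemma fderiv_zero_off {g : E → F'} {K : Set E} (hKc : IsClosed K)
    (h0 : ∀ x ∉ K, g x = 0) {x : E} (hx : x ∉ K) : fderiv ℝ g x = 0 := by
  have hev : g =ᶠ[nhds x] (fun _ => 0) :=
    Filter.eventuallyEq_of_mem (hKc.isOpen_compl.mem_nhds hx) fun y hy => h0 y hy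
  rw [hev.fderiv_eq]
  exact fderiv_const_apply 0

lemma spatial_div (f a : E → ℝ) (b : E → E) (hf : ContDiff ℝ 1 f) (ha : ContDiff ℝ 1 a)
    (hb : ContDiff ℝ 1 b) {K : Set E} (hK : IsCompact K) (ha0 : ∀ x ∉ K, a x = 0) :
    ∫ x, f x * ediv (fun y => a y • b y) x = -∫ x, a x * fderiv ℝ f x (b x) := by
  set G : E → E := fun y => a y • b y with hG
  have hGc : ContDiff ℝ 1 G := ha.smul hb
  have hGd : Differentiable ℝ G := hGc.differentiable one_ne_zero
  set g : Fin d → E → ℝ := fun i y => a y * b y i with hg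
  have hgC : ∀ i, ContDiff ℝ 1 (g i) := fun i =>
    ha.mul ((EuclideanSpace.proj (𝕜 := ℝ) i).contDiff.comp hb)
  have hgs : ∀ i, HasCompactSupport (g i) := fun i =>
    HasCompactSupport.intro hK fun x hx => by simp [hg, ha0 x hx]
  have hgfd : ∀ i x, fderiv ℝ G x (EuclideanSpace.single i 1) i
      = fderiv ℝ (g i) x (EuclideanSpace.single i 1) := by
    intro i x
    have hgi : g i = fun y => (EuclideanSpace.proj (𝕜 := ℝ) i) (G y) := by
      funext y; simp [hg, hG]
    have hcomp : HasFDerivAt (fun y => (EuclideanSpace.proj (𝕜 := ℝ) i) (G y))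
        ((EuclideanSpace.proj (𝕜 := ℝ) i).comp (fderiv ℝ G x)) x :=
      ((EuclideanSpace.proj (𝕜 := ℝ) i).hasFDerivAt.comp x (hGd x).hasFDerivAt)
    rw [hgi, hcomp.fderiv]
    rfl
  have hsum : ∀ x, f x * ediv G x
      = ∑ i, f x * fderiv ℝ (g i) x (EuclideanSpace.single i 1) := by
    intro x
    rw [ediv, Finset.mul_sum]
    exact Finset.sum_congr rfl fun i _ => by rw [hgfd]
  rw [show (∫ x, f x * ediv G x) = ∫ x, ∑ i, f x * fderiv ℝ (g i) x (EuclideanSpace.single i 1)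
    from integral_congr_ae (Eventually.of_forall fun x => hsum x)]
  have hint : ∀ i, Integrable fun x => f x * fderiv ℝ (g i) x (EuclideanSpace.single i 1) := by
    intro i
    apply integrable_of_zero_off
      (hf.continuous.mul ((((hgC i).continuous_fderiv one_ne_zero)).clm_apply continuous_const)) hK
    intro x hx
    show f x * fderiv ℝ (g i) x (EuclideanSpace.single i 1) = 0
    rw [fderiv_zero_off (g := g i) hK.isClosed (fun y hy => by simp [hg, ha0 y hy]) hx]
    simp
  rw [integral_finset_sum _ fun i _ => hint i]
  have hibp : ∀ i, (∫ x, f x * fderiv ℝ (g i) x (EuclideanSpace.single i 1))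
      = -∫ x, g i x * fderiv ℝ f x (EuclideanSpace.single i 1) :=
    fun i => ibp_mul f (g i) hf (hgC i) (hgs i) _
  simp_rw [hibp]
  have hint2 : ∀ i, Integrable fun x => g i x * fderiv ℝ f x (EuclideanSpace.single i 1) := by
    intro i
    apply integrable_of_zero_off
      (((hgC i).continuous).mul (((hf.continuous_fderiv one_ne_zero)).clm_apply continuous_const)) hK
    intro x hx
    simp [hg, ha0 x hx]
  rw [Finset.sum_neg_distrib, ← integral_finset_sum _ fun i _ => hint2 i]
  congr 1
  congr 1
  funext x
  rw [clm_decomp (fderiv ℝ f x) (b x), Finset.mul_sum]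
  exact Finset.sum_congr rfl fun i _ => by simp [hg]; ring

lemma spatial_lap (f a : E → ℝ) (hf : ContDiff ℝ 2 f) (ha : ContDiff ℝ 2 a)
    {K : Set E} (hK : IsCompact K) (ha0 : ∀ x ∉ K, a x = 0) :
    ∫ x, f x * elap a x = ∫ x, a x * elap f x := by
  set ai : Fin d → E → ℝ := fun i y => fderiv ℝ a y (EuclideanSpace.single i 1) with hai
  set fi : Fin d → E → ℝ := fun i y => fderiv ℝ f y (EuclideanSpace.single i 1) with hfi
  have haiC : ∀ i, ContDiff ℝ 1 (ai i) :=
    fun i => (ha.fderiv_right (m := 1) le_rfl).clm_apply contDiff_const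
  have hfiC : ∀ i, ContDiff ℝ 1 (fi i) :=
    fun i => (hf.fderiv_right (m := 1) le_rfl).clm_apply contDiff_const
  have hai0 : ∀ i, ∀ x ∉ K, ai i x = 0 := by
    intro i x hx
    simp [hai, fderiv_zero_off hK.isClosed ha0 hx]
  have hais : ∀ i, HasCompactSupport (ai i) := fun i =>
    HasCompactSupport.intro hK (hai0 i)
  have h1 : ∀ i, (∫ x, f x * fderiv ℝ (ai i) x (EuclideanSpace.single i 1))
      = -∫ x, ai i x * fi i x :=
    fun i => ibp_mul f (ai i) (hf.of_le one_le_two) (haiC i) (hais i) _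
  have h2 : ∀ i, (∫ x, a x * fderiv ℝ (fi i) x (EuclideanSpace.single i 1))
      = -∫ x, ai i x * fi i x := by
    intro i
    have := ibp_mul (fi i) a (hfiC i) (ha.of_le one_le_two)
      (HasCompactSupport.intro hK ha0) (EuclideanSpace.single i 1)
    -- this : ∫ fi * ∂a = -∫ a * ∂fi
    have h3 : ∫ x, fi i x * fderiv ℝ a x (EuclideanSpace.single i 1) = ∫ x, ai i x * fi i x := by
      simp_rw [mul_comm]
      rfl
    linarith
  have hintf : ∀ i, Integrable fun x => f x * fderiv ℝ (ai i) x (EuclideanSpace.single i 1) := by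
    intro i
    apply integrable_of_zero_off
      (hf.continuous.mul ((((haiC i).continuous_fderiv one_ne_zero)).clm_apply continuous_const)) hK
    intro x hx
    show f x * fderiv ℝ (ai i) x (EuclideanSpace.single i 1) = 0
    rw [fderiv_zero_off hK.isClosed (hai0 i) hx]
    simp
  have hinta : ∀ i, Integrable fun x => a x * fderiv ℝ (fi i) x (EuclideanSpace.single i 1) :=
    fun i => integrable_of_zero_off
      (ha.continuous.mul ((((hfiC i).continuous_fderiv one_ne_zero)).clm_apply continuous_const)) hK
      (fun x hx => by simp [ha0 x hx])
  calc ∫ x, f x * elap a x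
      = ∫ x, ∑ i, f x * fderiv ℝ (ai i) x (EuclideanSpace.single i 1) := by
        congr 1; funext x; rw [elap, Finset.mul_sum]
    _ = ∑ i, ∫ x, f x * fderiv ℝ (ai i) x (EuclideanSpace.single i 1) :=
        integral_finset_sum _ fun i _ => hintf i
    _ = ∑ i, -∫ x, ai i x * fi i x := by simp_rw [h1]
    _ = ∑ i, ∫ x, a x * fderiv ℝ (fi i) x (EuclideanSpace.single i 1) := by simp_rw [h2]
    _ = ∫ x, ∑ i, a x * fderiv ℝ (fi i) x (EuclideanSpace.single i 1) :=
        (integral_finset_sum _ fun i _ => hinta i).symm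
    _ = ∫ x, a x * elap f x := by
        congr 1; funext x; rw [elap, Finset.mul_sum]

theorem main_all (β T : ℝ) (hT : 0 < T)
    (φ ρ : ℝ × E → ℝ) (hφ : ContDiff ℝ 2 φ) (hρ : ContDiff ℝ 2 ρ)
    (v : ℝ × E → EuclideanSpace ℝ (Fin d)) (hv : ContDiff ℝ 1 v)
    (K : Set (EuclideanSpace ℝ (Fin d))) (hK : IsCompact K)
    (hsupp : ∀ t x, x ∉ K → ρ (t, x) = 0) :
    (∫ t in (0:ℝ)..T, ∫ x : EuclideanSpace ℝ (Fin d),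
        φ (t, x) * (deriv (fun τ => ρ (τ, x)) t
          + ediv (fun y => ρ (t, y) • v (t, y)) x
          - (1 / β) * elap (fun y => ρ (t, y)) x))
      = -(∫ t in (0:ℝ)..T, ∫ x : EuclideanSpace ℝ (Fin d),
            ρ (t, x) * (deriv (fun τ => φ (τ, x)) t
              + (inner ℝ (v (t, x)) (gradient (fun y => φ (t, y)) x) : ℝ)
              + (1 / β) * elap (fun y => φ (t, y)) x))
        + (∫ x : EuclideanSpace ℝ (Fin d), φ (T, x) * ρ (T, x))
        - (∫ x : EuclideanSpace ℝ (Fin d), φ (0, x) * ρ (0, x)) := by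
  have hφd : Differentiable ℝ φ := hφ.differentiable two_ne_zero
  have hρd : Differentiable ℝ ρ := hρ.differentiable two_ne_zero
  have hvd : Differentiable ℝ v := hv.differentiable one_ne_zero
  have hφf : Continuous (fderiv ℝ φ) := hφ.continuous_fderiv two_ne_zero
  have hρf : Continuous (fderiv ℝ ρ) := hρ.continuous_fderiv two_ne_zero
  have hvf : Continuous (fderiv ℝ v) := hv.continuous_fderiv one_ne_zero
  have hφff : Continuous (fderiv ℝ (fderiv ℝ φ)) :=
    (hφ.fderiv_right (m := 1) le_rfl).continuous_fderiv one_ne_zero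
  have hρff : Continuous (fderiv ℝ (fderiv ℝ ρ)) :=
    (hρ.fderiv_right (m := 1) le_rfl).continuous_fderiv one_ne_zero
  -- vanishing of ρ and its derivatives off K
  have hopen : IsOpen ((univ : Set ℝ) ×ˢ Kᶜ) := isOpen_univ.prod hK.isClosed.isOpen_compl
  have hz1 : ∀ t x, x ∉ K → fderiv ℝ ρ (t, x) = 0 := by
    intro t x hx
    have hev : ρ =ᶠ[nhds ((t, x) : ℝ × E)] (fun _ => 0) :=
      Filter.eventuallyEq_of_mem (hopen.mem_nhds ⟨trivial, hx⟩)
        fun p hp => hsupp p.1 p.2 hp.2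
    rw [hev.fderiv_eq]
    exact fderiv_const_apply 0
  have hz2 : ∀ t x, x ∉ K → fderiv ℝ (fderiv ℝ ρ) (t, x) = 0 := by
    intro t x hx
    have hev : fderiv ℝ ρ =ᶠ[nhds ((t, x) : ℝ × E)] (fun _ => 0) :=
      Filter.eventuallyEq_of_mem (hopen.mem_nhds ⟨trivial, hx⟩)
        fun p hp => hz1 p.1 p.2 hp.2
    rw [hev.fderiv_eq]
    exact fderiv_const_apply 0
  set e : Fin d → EuclideanSpace ℝ (Fin d) := fun i => EuclideanSpace.single i 1 with he
  -- the six joint integrands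
  set P1 : ℝ × E → ℝ := fun p => φ p * fderiv ℝ ρ p (1, 0) with hP1
  set P2 : ℝ × E → ℝ := fun p => φ p *
    ∑ i, (ρ p * fderiv ℝ v p (0, e i) i + fderiv ℝ ρ p (0, e i) * v p i) with hP2
  set P3 : ℝ × E → ℝ := fun p => φ p *
    ∑ i, fderiv ℝ (fderiv ℝ ρ) p (0, e i) (0, e i) with hP3
  set Q1 : ℝ × E → ℝ := fun p => ρ p * fderiv ℝ φ p (1, 0) with hQ1
  set Q2 : ℝ × E → ℝ := fun p => ρ p * fderiv ℝ φ p (0, v p) with hQ2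
  set Q3 : ℝ × E → ℝ := fun p => ρ p *
    ∑ i, fderiv ℝ (fderiv ℝ φ) p (0, e i) (0, e i) with hQ3
  -- continuity of the six
  have capply : ∀ (w : ℝ × E), Continuous fun p : ℝ × E => fderiv ℝ ρ p w := fun w =>
    (ContinuousLinearMap.apply ℝ ℝ w).continuous.comp hρf
  have capplyφ : ∀ (w : ℝ × E), Continuous fun p : ℝ × E => fderiv ℝ φ p w := fun w =>
    (ContinuousLinearMap.apply ℝ ℝ w).continuous.comp hφf
  have hP1c : Continuous P1 := hφ.continuous.mul (capply (1, 0))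
  have hP2c : Continuous P2 := by
    apply hφ.continuous.mul
    apply continuous_finset_sum
    intro i _
    have c1 : Continuous fun p : ℝ × E => fderiv ℝ v p (0, e i) i :=
      (EuclideanSpace.proj (𝕜 := ℝ) i).continuous.comp
        ((ContinuousLinearMap.apply ℝ (EuclideanSpace ℝ (Fin d))
          (((0 : ℝ), e i) : ℝ × E)).continuous.comp hvf)
    have c2 : Continuous fun p : ℝ × E => v p i := (EuclideanSpace.proj (𝕜 := ℝ) i).continuous.comp hv.continuous
    exact (hρ.continuous.mul c1).add ((capply (0, e i)).mul c2)
  have hP3c : Continuous P3 := by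
    apply hφ.continuous.mul
    apply continuous_finset_sum
    intro i _
    exact (ContinuousLinearMap.apply ℝ ℝ ((0 : ℝ), e i)).continuous.comp
      ((ContinuousLinearMap.apply ℝ (ℝ × E →L[ℝ] ℝ) ((0 : ℝ), e i)).continuous.comp hρff)
  have hQ1c : Continuous Q1 := hρ.continuous.mul (capplyφ (1, 0))
  have hQ2c : Continuous Q2 := by
    apply hρ.continuous.mul
    exact hφf.clm_apply (continuous_const.prodMk hv.continuous)
  have hQ3c : Continuous Q3 := by
    apply hρ.continuous.mul
    apply continuous_finset_sum
    intro i _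
    exact (ContinuousLinearMap.apply ℝ ℝ ((0 : ℝ), e i)).continuous.comp
      ((ContinuousLinearMap.apply ℝ (ℝ × E →L[ℝ] ℝ) ((0 : ℝ), e i)).continuous.comp hφff)
  -- spatial support of the six
  have hP1z : ∀ t x, x ∉ K → P1 (t, x) = 0 := fun t x hx => by simp [hP1, hz1 t x hx]
  have hP2z : ∀ t x, x ∉ K → P2 (t, x) = 0 := fun t x hx => by
    simp [hP2, hsupp t x hx, hz1 t x hx]
  have hP3z : ∀ t x, x ∉ K → P3 (t, x) = 0 := fun t x hx => by simp [hP3, hz2 t x hx]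
  have hQ1z : ∀ t x, x ∉ K → Q1 (t, x) = 0 := fun t x hx => by simp [hQ1, hsupp t x hx]
  have hQ2z : ∀ t x, x ∉ K → Q2 (t, x) = 0 := fun t x hx => by simp [hQ2, hsupp t x hx]
  have hQ3z : ∀ t x, x ∉ K → Q3 (t, x) = 0 := fun t x hx => by simp [hQ3, hsupp t x hx]
  -- slice integrability
  have sint : ∀ (F : ℝ × E → ℝ), Continuous F → (∀ t x, x ∉ K → F (t, x) = 0) →
      ∀ t, Integrable fun x => F (t, x) := fun F hFc hFz t =>
    integrable_of_zero_off (hFc.comp (continuous_const.prodMk continuous_id)) hK (hFz t)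
  -- slice lemma rewrites
  have hderivρ : ∀ t x, deriv (fun τ => ρ (τ, x)) t = fderiv ℝ ρ (t, x) (1, 0) :=
    fun t x => (hasDerivAt_time hρd t x).deriv
  have hderivφ : ∀ t x, deriv (fun τ => φ (τ, x)) t = fderiv ℝ φ (t, x) (1, 0) :=
    fun t x => (hasDerivAt_time hφd t x).deriv
  have hediv : ∀ t x, ediv (fun y => ρ (t, y) • v (t, y)) x
      = ∑ i, (ρ (t, x) * fderiv ℝ v (t, x) (0, e i) i
          + fderiv ℝ ρ (t, x) (0, e i) * v (t, x) i) := by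
    intro t x
    rw [ediv]
    apply Finset.sum_congr rfl
    intro i _
    have ha : DifferentiableAt ℝ (fun y : E => ρ (t, y)) x :=
      ((contDiff_slice hρ t).differentiable two_ne_zero) x
    have hb : DifferentiableAt ℝ (fun y : E => v (t, y)) x :=
      ((contDiff_slice hv t).differentiable one_ne_zero) x
    rw [fderiv_fun_smul ha hb]
    rw [ContinuousLinearMap.add_apply, ContinuousLinearMap.smul_apply,
      ContinuousLinearMap.smulRight_apply]
    rw [fderiv_slice hρd, fderiv_slice hvd]
    simp only [ContinuousLinearMap.coe_comp', Function.comp_apply,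
      ContinuousLinearMap.inr_apply]
    simp [PiLp.add_apply, PiLp.smul_apply, smul_eq_mul]
    rfl
  have helapρ : ∀ t x, elap (fun y => ρ (t, y)) x
      = ∑ i, fderiv ℝ (fderiv ℝ ρ) (t, x) (0, e i) (0, e i) := by
    intro t x
    rw [elap]
    exact Finset.sum_congr rfl fun i _ => fderiv2_slice hρ t x (e i) (e i)
  have helapφ : ∀ t x, elap (fun y => φ (t, y)) x
      = ∑ i, fderiv ℝ (fderiv ℝ φ) (t, x) (0, e i) (0, e i) := by
    intro t x
    rw [elap]
    exact Finset.sum_congr rfl fun i _ => fderiv2_slice hφ t x (e i) (e i)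
  have hinner : ∀ t x, (inner ℝ (v (t, x)) (gradient (fun y => φ (t, y)) x) : ℝ)
      = fderiv ℝ φ (t, x) (0, v (t, x)) := by
    intro t x
    rw [real_inner_comm, gradient, InnerProductSpace.toDual_symm_apply]
    rw [fderiv_slice hφd]
    rfl
  -- LHS inner integral splitting
  have hLHS : ∀ t, (∫ x, φ (t, x) * (deriv (fun τ => ρ (τ, x)) t
        + ediv (fun y => ρ (t, y) • v (t, y)) x - (1 / β) * elap (fun y => ρ (t, y)) x))
      = (∫ x, P1 (t, x)) + (∫ x, P2 (t, x)) - (1 / β) * ∫ x, P3 (t, x) := by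
    intro t
    have : ∀ x : E, φ (t, x) * (deriv (fun τ => ρ (τ, x)) t
        + ediv (fun y => ρ (t, y) • v (t, y)) x - (1 / β) * elap (fun y => ρ (t, y)) x)
        = P1 (t, x) + P2 (t, x) - (1 / β) * P3 (t, x) := by
      intro x
      rw [hderivρ, hediv, helapρ]
      simp only [hP1, hP2, hP3]
      ring
    rw [integral_congr_ae (Eventually.of_forall this)]
    have ha1 := sint P1 hP1c hP1z t
    have ha2 := sint P2 hP2c hP2z t
    have ha3 := sint P3 hP3c hP3z t
    have h12 : Integrable (fun x : E => P1 (t, x) + P2 (t, x)) volume := ha1.add ha2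
    have h3c : Integrable (fun x : E => (1 / β) * P3 (t, x)) volume := ha3.const_mul _
    rw [integral_sub h12 h3c, integral_add ha1 ha2, integral_const_mul _ _]
  -- RHS inner integral splitting
  have hRHS : ∀ t, (∫ x, ρ (t, x) * (deriv (fun τ => φ (τ, x)) t
        + (inner ℝ (v (t, x)) (gradient (fun y => φ (t, y)) x) : ℝ)
        + (1 / β) * elap (fun y => φ (t, y)) x))
      = (∫ x, Q1 (t, x)) + (∫ x, Q2 (t, x)) + (1 / β) * ∫ x, Q3 (t, x) := by
    intro t
    have : ∀ x : E, ρ (t, x) * (deriv (fun τ => φ (τ, x)) t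
        + (inner ℝ (v (t, x)) (gradient (fun y => φ (t, y)) x) : ℝ)
        + (1 / β) * elap (fun y => φ (t, y)) x)
        = Q1 (t, x) + Q2 (t, x) + (1 / β) * Q3 (t, x) := by
      intro x
      rw [hderivφ, hinner, helapφ]
      simp only [hQ1, hQ2, hQ3]
      ring
    rw [integral_congr_ae (Eventually.of_forall this)]
    have ha1 := sint Q1 hQ1c hQ1z t
    have ha2 := sint Q2 hQ2c hQ2z t
    have ha3 := sint Q3 hQ3c hQ3z t
    have h12 : Integrable (fun x : E => Q1 (t, x) + Q2 (t, x)) volume := ha1.add ha2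
    have h3c : Integrable (fun x : E => (1 / β) * Q3 (t, x)) volume := ha3.const_mul _
    rw [integral_add h12 h3c, integral_add ha1 ha2, integral_const_mul _ _]
  -- spatial identities
  have hI2 : ∀ t, (∫ x, P2 (t, x)) = -∫ x, Q2 (t, x) := by
    intro t
    have h1 : (∫ x, P2 (t, x)) = ∫ x, (fun y => φ (t, y)) x *
        ediv (fun y => ρ (t, y) • v (t, y)) x := by
      congr 1
      funext x
      rw [hediv]
    rw [h1, spatial_div (fun y => φ (t, y)) (fun y => ρ (t, y)) (fun y => v (t, y))
      ((contDiff_slice hφ t).of_le one_le_two) ((contDiff_slice hρ t).of_le one_le_two)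
      (contDiff_slice hv t) hK (fun x hx => hsupp t x hx)]
    congr 1
    congr 1
    funext x
    rw [fderiv_slice hφd]
    rfl
  have hI3 : ∀ t, (∫ x, P3 (t, x)) = ∫ x, Q3 (t, x) := by
    intro t
    have h1 : (∫ x, P3 (t, x)) = ∫ x, (fun y => φ (t, y)) x * elap (fun y => ρ (t, y)) x := by
      congr 1
      funext x
      rw [helapρ]
    have h2 : (∫ x, Q3 (t, x)) = ∫ x, (fun y => ρ (t, y)) x * elap (fun y => φ (t, y)) x := by
      congr 1
      funext x
      rw [helapφ]
    rw [h1, h2]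
    exact spatial_lap _ _ (contDiff_slice hφ t) (contDiff_slice hρ t) hK
      (fun x hx => hsupp t x hx)
  -- time identity
  have hP1int : Integrable P1 ((volume.restrict (Ioc 0 T)).prod volume) :=
    integrable_prod hT hP1c hK hP1z
  have hQ1int : Integrable Q1 ((volume.restrict (Ioc 0 T)).prod volume) :=
    integrable_prod hT hQ1c hK hQ1z
  have hTime : (∫ t in (0:ℝ)..T, ∫ x, P1 (t, x))
      = -(∫ t in (0:ℝ)..T, ∫ x, Q1 (t, x))
        + (∫ x : E, φ (T, x) * ρ (T, x)) - ∫ x : E, φ (0, x) * ρ (0, x) := by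
    have swap1 : (∫ t in Ioc (0:ℝ) T, ∫ x, P1 (t, x))
        = ∫ x, ∫ t in Ioc (0:ℝ) T, P1 (t, x) :=
      integral_integral_swap (f := fun t x => P1 (t, x)) hP1int
    have swap2 : (∫ x, ∫ t in Ioc (0:ℝ) T, Q1 (t, x))
        = ∫ t in Ioc (0:ℝ) T, ∫ x, Q1 (t, x) :=
      (integral_integral_swap (f := fun t x => Q1 (t, x)) hQ1int).symm
    have hx1 : ∀ x : E, (∫ t in Ioc (0:ℝ) T, P1 (t, x))
        = φ (T, x) * ρ (T, x) - φ (0, x) * ρ (0, x) - ∫ t in Ioc (0:ℝ) T, Q1 (t, x) := by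
      intro x
      have hcu : Continuous fun τ : ℝ => fderiv ℝ φ (τ, x) (1, 0) :=
        (capplyφ (1, 0)).comp (continuous_id.prodMk continuous_const)
      have hcv : Continuous fun τ : ℝ => fderiv ℝ ρ (τ, x) (1, 0) :=
        (capply (1, 0)).comp (continuous_id.prodMk continuous_const)
      have ibp := intervalIntegral.integral_mul_deriv_eq_deriv_mul
        (u := fun τ => φ (τ, x)) (v := fun τ => ρ (τ, x))
        (u' := fun τ => fderiv ℝ φ (τ, x) (1, 0)) (v' := fun τ => fderiv ℝ ρ (τ, x) (1, 0))
        (fun τ _ => hasDerivAt_time hφd τ x) (fun τ _ => hasDerivAt_time hρd τ x)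
        (hcu.intervalIntegrable 0 T) (hcv.intervalIntegrable 0 T)
      rw [intervalIntegral.integral_of_le hT.le, intervalIntegral.integral_of_le hT.le] at ibp
      calc (∫ t in Ioc (0:ℝ) T, P1 (t, x))
          = ∫ t in Ioc (0:ℝ) T, φ (t, x) * fderiv ℝ ρ (t, x) (1, 0) := rfl
        _ = φ (T, x) * ρ (T, x) - φ (0, x) * ρ (0, x)
            - ∫ t in Ioc (0:ℝ) T, fderiv ℝ φ (t, x) (1, 0) * ρ (t, x) := ibp
        _ = φ (T, x) * ρ (T, x) - φ (0, x) * ρ (0, x) - ∫ t in Ioc (0:ℝ) T, Q1 (t, x) := by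
            congr 1
            apply integral_congr_ae (Eventually.of_forall fun t => ?_)
            simp only [hQ1]
            ring
    have hA : Integrable fun x : E => φ (T, x) * ρ (T, x) :=
      sint (fun p => φ (p.1, p.2) * ρ (p.1, p.2)) (hφ.continuous.mul hρ.continuous)
        (fun t x hx => by simp [hsupp t x hx]) T
    have hB : Integrable fun x : E => φ (0, x) * ρ (0, x) :=
      sint (fun p => φ (p.1, p.2) * ρ (p.1, p.2)) (hφ.continuous.mul hρ.continuous)
        (fun t x hx => by simp [hsupp t x hx]) 0
    have hC : Integrable fun x : E => ∫ t in Ioc (0:ℝ) T, Q1 (t, x) :=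
      hQ1int.integral_prod_right
    rw [intervalIntegral.integral_of_le hT.le, intervalIntegral.integral_of_le hT.le,
      swap1]
    rw [integral_congr_ae (Eventually.of_forall hx1)]
    have hAB : Integrable (fun x : E => φ (T, x) * ρ (T, x) - φ (0, x) * ρ (0, x)) volume :=
      hA.sub hB
    rw [integral_sub hAB hC, integral_sub hA hB, swap2]
    ring
  -- interval integrability of the slice integrals
  have iint : ∀ (F : ℝ × E → ℝ), Continuous F → (∀ t x, x ∉ K → F (t, x) = 0) →
      IntervalIntegrable (fun t => ∫ x, F (t, x)) volume 0 T := fun F hFc hFz =>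
    (cont_param_integral hFc hK hFz).intervalIntegrable 0 T
  -- final assembly
  rw [intervalIntegral.integral_congr (g := fun t => (∫ x, P1 (t, x)) + (∫ x, P2 (t, x))
    - (1 / β) * ∫ x, P3 (t, x)) (fun t _ => hLHS t)]
  rw [intervalIntegral.integral_congr (g := fun t => (∫ x, Q1 (t, x)) + (∫ x, Q2 (t, x))
    + (1 / β) * ∫ x, Q3 (t, x)) (fun t _ => hRHS t)]
  rw [intervalIntegral.integral_sub (((iint P1 hP1c hP1z).add (iint P2 hP2c hP2z)))
    ((iint P3 hP3c hP3z).const_mul _),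
    intervalIntegral.integral_add (iint P1 hP1c hP1z) (iint P2 hP2c hP2z),
    intervalIntegral.integral_const_mul _ _]
  rw [intervalIntegral.integral_add (((iint Q1 hQ1c hQ1z).add (iint Q2 hQ2c hQ2z)))
    ((iint Q3 hQ3c hQ3z).const_mul _),
    intervalIntegral.integral_add (iint Q1 hQ1c hQ1z) (iint Q2 hQ2c hQ2z),
    intervalIntegral.integral_const_mul _ _]
  have hI2' : (∫ t in (0:ℝ)..T, ∫ x, P2 (t, x)) = -(∫ t in (0:ℝ)..T, ∫ x, Q2 (t, x)) := by
    rw [intervalIntegral.integral_congr (g := fun t => -∫ x, Q2 (t, x)) (fun t _ => hI2 t)]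
    rw [intervalIntegral.integral_neg]
  have hI3' : (∫ t in (0:ℝ)..T, ∫ x, P3 (t, x)) = ∫ t in (0:ℝ)..T, ∫ x, Q3 (t, x) :=
    intervalIntegral.integral_congr (fun t _ => hI3 t)
  rw [hI2', hI3', hTime]
  ring

end MFC

/-- integration-by-parts identity for the Lagrange multiplier term in the
saddle-point formulation of the MFC problem: for `φ, ρ` twice continuously differentiable
and `v` continuously differentiable, with `ρ(t,·)` supported in a compact set `K` for
`t ∈ [0,T]`,
`∫₀ᵀ∫ φ (∂_t ρ + div(ρv) - (1/β)Δρ) = -∫₀ᵀ∫ ρ (∂_t φ + ⟨v, ∇φ⟩ + (1/β)Δφ)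
  + ∫ φ(T,·)ρ(T,·) - ∫ φ(0,·)ρ(0,·)`. -/
theorem lagrange_multiplier_integration_by_parts
    (d : ℕ) (hd : 0 < d) (β T : ℝ) (hβ : β ≠ 0) (hT : 0 < T)
    (φ ρ : ℝ × EuclideanSpace ℝ (Fin d) → ℝ)
    (hφ : ContDiff ℝ 2 φ) (hρ : ContDiff ℝ 2 ρ)
    (v : ℝ × EuclideanSpace ℝ (Fin d) → EuclideanSpace ℝ (Fin d))
    (hv : ContDiff ℝ 1 v)
    (K : Set (EuclideanSpace ℝ (Fin d))) (hK : IsCompact K)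
    (hsupp : ∀ t ∈ Set.Icc (0:ℝ) T, ∀ x ∉ K, ρ (t, x) = 0) :
    (∫ t in (0:ℝ)..T, ∫ x : EuclideanSpace ℝ (Fin d),
        φ (t, x) * (deriv (fun τ => ρ (τ, x)) t
          + ediv (fun y => ρ (t, y) • v (t, y)) x
          - (1 / β) * elap (fun y => ρ (t, y)) x))
      = -(∫ t in (0:ℝ)..T, ∫ x : EuclideanSpace ℝ (Fin d),
            ρ (t, x) * (deriv (fun τ => φ (τ, x)) t
              + ⟪v (t, x), gradient (fun y => φ (t, y)) x⟫
              + (1 / β) * elap (fun y => φ (t, y)) x))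
        + (∫ x : EuclideanSpace ℝ (Fin d), φ (T, x) * ρ (T, x))
        - (∫ x : EuclideanSpace ℝ (Fin d), φ (0, x) * ρ (0, x)) := by
  obtain ⟨R, hR0, hRsub⟩ : ∃ R, 0 < R ∧ K ⊆ ball (0 : EuclideanSpace ℝ (Fin d)) R :=
    hK.isBounded.subset_ball_lt 0 0
  let χ : ContDiffBump (0 : EuclideanSpace ℝ (Fin d)) := ⟨R+1, R+2, by linarith, by linarith⟩
  set ρ' : ℝ × EuclideanSpace ℝ (Fin d) → ℝ := fun p => ρ p * χ p.2 with hρ'def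
  have hρ'c : ContDiff ℝ 2 ρ' := hρ.mul (χ.contDiff.comp contDiff_snd)
  have hρd : Differentiable ℝ ρ := hρ.differentiable two_ne_zero
  have hsupp' : ∀ t x, x ∉ closedBall (0 : EuclideanSpace ℝ (Fin d)) (R+2) → ρ' (t, x) = 0 := by
    intro t x hx
    have hxs : x ∉ Function.support χ := by
      rw [χ.support_eq]
      exact fun h => hx (ball_subset_closedBall h)
    simp [hρ'def, Function.notMem_support.1 hxs]
  have hslice : ∀ t ∈ Set.Icc (0:ℝ) T, ∀ x, ρ' (t, x) = ρ (t, x) := by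
    intro t ht x
    by_cases hx : x ∈ K
    · have h1 : χ x = 1 := χ.one_of_mem_closedBall
        (show x ∈ closedBall (0 : EuclideanSpace ℝ (Fin d)) (R+1) from
          ball_subset_closedBall (ball_subset_ball (by linarith : R ≤ R+1) (hRsub hx)))
      simp [hρ'def, h1]
    · simp [hρ'def, hsupp t ht x hx]
  have main := MFC.main_all β T hT φ ρ' hφ hρ'c v hv _
    (isCompact_closedBall (0 : EuclideanSpace ℝ (Fin d)) (R+2)) hsupp'
  have hne : ∀ᵐ t : ℝ ∂(volume : Measure ℝ), t ≠ T := by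
    rw [ae_iff]
    have : {t : ℝ | ¬ t ≠ T} = {T} := by ext t; simp
    rw [this]
    exact measure_singleton T
  -- transfer LHS
  have hL : (∫ t in (0:ℝ)..T, ∫ x : EuclideanSpace ℝ (Fin d),
        φ (t, x) * (deriv (fun τ => ρ (τ, x)) t
          + ediv (fun y => ρ (t, y) • v (t, y)) x
          - (1 / β) * elap (fun y => ρ (t, y)) x))
      = ∫ t in (0:ℝ)..T, ∫ x : EuclideanSpace ℝ (Fin d),
        φ (t, x) * (deriv (fun τ => ρ' (τ, x)) t
          + ediv (fun y => ρ' (t, y) • v (t, y)) x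
          - (1 / β) * elap (fun y => ρ' (t, y)) x) := by
    apply intervalIntegral.integral_congr_ae
    filter_upwards [hne] with t htT ht
    have ht' : t ∈ Set.Ioo (0:ℝ) T := by
      rw [Set.uIoc_of_le hT.le] at ht
      exact ⟨ht.1, lt_of_le_of_ne ht.2 htT⟩
    have htIcc : t ∈ Set.Icc (0:ℝ) T := ⟨ht'.1.le, ht'.2.le⟩
    have hfun : (fun y => ρ' (t, y)) = fun y => ρ (t, y) := funext fun y => hslice t htIcc y
    have hfun2 : (fun y => ρ' (t, y) • v (t, y)) = fun y => ρ (t, y) • v (t, y) :=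
      funext fun y => by rw [hslice t htIcc y]
    congr 1
    funext x
    rw [hfun, hfun2]
    have hder : deriv (fun τ => ρ' (τ, x)) t = deriv (fun τ => ρ (τ, x)) t := by
      have hdm : deriv (fun τ => ρ' (τ, x)) t = deriv (fun τ => ρ (τ, x)) t * χ x := by
        have : (fun τ => ρ' (τ, x)) = fun τ => ρ (τ, x) * χ x := rfl
        rw [this, deriv_mul_const (MFC.hasDerivAt_time hρd t x).differentiableAt]
      by_cases hx : x ∈ K
      · have h1 : χ x = 1 := χ.one_of_mem_closedBall
          (show x ∈ closedBall (0 : EuclideanSpace ℝ (Fin d)) (R+1) from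
            ball_subset_closedBall (ball_subset_ball (by linarith : R ≤ R+1) (hRsub hx)))
        rw [hdm, h1, mul_one]
      · have hz : deriv (fun τ => ρ (τ, x)) t = 0 := by
          have hev : (fun τ => ρ (τ, x)) =ᶠ[nhds t] (fun _ => 0) := by
            filter_upwards [Ioo_mem_nhds ht'.1 ht'.2] with τ hτ
            exact hsupp τ ⟨hτ.1.le, hτ.2.le⟩ x hx
          rw [hev.deriv_eq]
          exact deriv_const t 0
        rw [hdm, hz, zero_mul]
    rw [hder]
  -- transfer RHS main integral
  have hR2 : (∫ t in (0:ℝ)..T, ∫ x : EuclideanSpace ℝ (Fin d),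
        ρ (t, x) * (deriv (fun τ => φ (τ, x)) t
          + ⟪v (t, x), gradient (fun y => φ (t, y)) x⟫
          + (1 / β) * elap (fun y => φ (t, y)) x))
      = ∫ t in (0:ℝ)..T, ∫ x : EuclideanSpace ℝ (Fin d),
        ρ' (t, x) * (deriv (fun τ => φ (τ, x)) t
          + ⟪v (t, x), gradient (fun y => φ (t, y)) x⟫
          + (1 / β) * elap (fun y => φ (t, y)) x) := by
    refine intervalIntegral.integral_congr fun t ht => ?_
    rw [Set.uIcc_of_le hT.le] at ht
    show (∫ x : EuclideanSpace ℝ (Fin d), ρ (t, x) * (deriv (fun τ => φ (τ, x)) t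
          + ⟪v (t, x), gradient (fun y => φ (t, y)) x⟫
          + (1 / β) * elap (fun y => φ (t, y)) x))
      = ∫ x : EuclideanSpace ℝ (Fin d), ρ' (t, x) * (deriv (fun τ => φ (τ, x)) t
          + ⟪v (t, x), gradient (fun y => φ (t, y)) x⟫
          + (1 / β) * elap (fun y => φ (t, y)) x)
    congr 1
    funext x
    rw [hslice t ht x]
  have hBT : (∫ x : EuclideanSpace ℝ (Fin d), φ (T, x) * ρ' (T, x))
      = ∫ x : EuclideanSpace ℝ (Fin d), φ (T, x) * ρ (T, x) := by
    congr 1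
    funext x
    rw [hslice T (Set.right_mem_Icc.2 hT.le) x]
  have hB0 : (∫ x : EuclideanSpace ℝ (Fin d), φ (0, x) * ρ' (0, x))
      = ∫ x : EuclideanSpace ℝ (Fin d), φ (0, x) * ρ (0, x) := by
    congr 1
    funext x
    rw [hslice 0 (Set.left_mem_Icc.2 hT.le) x]
  rw [hL, hR2, ← hBT, ← hB0]
  exact main
end
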